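/- arXiv:2406.09369 — 4 statements merged into one kernel-verified Lean document; each statement's English description precedes it below -/
import Mathlib

section
/- For n ≥ 3 and 2 ≤ k ≤ n−1, the number of permutations π ∈ S_n such that π² has exactly one descent and that descent has size k (i.e., π²(i) − π²(i+1) = k at the unique descent position i) equals (n−k)·b_k·e(n−k−1), where b_k is the number of permutations β ∈ S_{k+1} such that β² has exactly one descent and that descent has size k, and e(m) is the number of involutions in S_m. -/
/-- Number of descents of a permutation of `Fin n`
(indices `i` such that `π(i) > π(i+1)`). -/
def des {n : ℕ} (π : Equiv.Perm (Fin n)) : ℕ :=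
  (Finset.univ.filter
    (fun i : Fin n => ∃ j : Fin n, (j : ℕ) = (i : ℕ) + 1 ∧ π j < π i)).card

/-- Number of involutions in the symmetric group `S_m`. -/
def numInvolutions (m : ℕ) : ℕ :=
  (Finset.univ.filter (fun τ : Equiv.Perm (Fin m) => τ * τ = 1)).card

/-- `σ` has exactly one descent and that descent has size `k`. -/
abbrev oneDescentOfSize {n : ℕ} (σ : Equiv.Perm (Fin n)) (k : ℕ) : Prop :=
  des σ = 1 ∧ ∃ i j : Fin n, (j : ℕ) = (i : ℕ) + 1 ∧ σ j < σ i ∧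
    (σ i : ℕ) = (σ j : ℕ) + k

namespace SqProof

open Equiv Finset

/-- value of σ at natural index -/
def sv {N : ℕ} (σ : Equiv.Perm (Fin N)) (i : ℕ) : ℕ :=
  if h : i < N then (σ ⟨i, h⟩).val else i

/-- descent at natural index -/
def dAt {N : ℕ} (σ : Equiv.Perm (Fin N)) (i : ℕ) : Prop :=
  i + 1 < N ∧ sv σ (i + 1) < sv σ i

lemma sv_mk {N : ℕ} (σ : Equiv.Perm (Fin N)) {i : ℕ} (h : i < N) :
    sv σ i = (σ ⟨i, h⟩).val := dif_pos h

lemma sv_apply {N : ℕ} (σ : Equiv.Perm (Fin N)) (x : Fin N) :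
    sv σ x.val = (σ x).val := by
  simp [sv, x.isLt]

lemma sv_lt {N : ℕ} (σ : Equiv.Perm (Fin N)) {i : ℕ} (h : i < N) : sv σ i < N := by
  simp only [sv, dif_pos h]; exact (σ ⟨i, h⟩).isLt

lemma sv_inj {N : ℕ} (σ : Equiv.Perm (Fin N)) {i j : ℕ} (hi : i < N) (hj : j < N)
    (h : sv σ i = sv σ j) : i = j := by
  simp only [sv, dif_pos hi, dif_pos hj] at h
  have := σ.injective (Fin.ext h)
  exact congrArg Fin.val this

lemma sv_surj {N : ℕ} (σ : Equiv.Perm (Fin N)) {v : ℕ} (hv : v < N) :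
    ∃ i, i < N ∧ sv σ i = v := by
  refine ⟨(σ.symm ⟨v, hv⟩).val, (σ.symm ⟨v, hv⟩).isLt, ?_⟩
  rw [sv_apply σ (σ.symm ⟨v, hv⟩), Equiv.apply_symm_apply]

lemma mem_des_iff {N : ℕ} (σ : Equiv.Perm (Fin N)) (i : Fin N) :
    (∃ j : Fin N, (j : ℕ) = (i : ℕ) + 1 ∧ σ j < σ i) ↔ dAt σ i.val := by
  constructor
  · rintro ⟨j, hj, hlt⟩
    have h1 : i.val + 1 < N := hj ▸ j.isLt
    refine ⟨h1, ?_⟩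
    have hji : j = ⟨i.val + 1, h1⟩ := Fin.ext hj
    have e1 : sv σ i.val = (σ i).val := sv_apply σ i
    have e2 : sv σ (i.val + 1) = (σ j).val := by rw [← hj]; exact sv_apply σ j
    rw [e1, e2]; exact hlt
  · rintro ⟨h1, h2⟩
    refine ⟨⟨i.val + 1, h1⟩, rfl, ?_⟩
    rw [Fin.lt_def]
    have e1 : sv σ i.val = (σ i).val := sv_apply σ i
    have e2 : sv σ (i.val + 1) = (σ ⟨i.val + 1, h1⟩).val := sv_mk σ h1
    rw [e1, e2] at h2
    exact h2

lemma des_eq_one_iff {N : ℕ} (σ : Equiv.Perm (Fin N)) :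
    des σ = 1 ↔ ∃ p, dAt σ p ∧ ∀ i, dAt σ i → i = p := by
  unfold des
  rw [Finset.card_eq_one]
  constructor
  · rintro ⟨a, ha⟩
    have haa : a ∈ Finset.univ.filter
        (fun i : Fin N => ∃ j : Fin N, (j : ℕ) = (i : ℕ) + 1 ∧ σ j < σ i) := by
      rw [ha]; exact Finset.mem_singleton_self a
    rw [Finset.mem_filter] at haa
    refine ⟨a.val, (mem_des_iff σ a).mp haa.2, ?_⟩
    intro i hi
    have hiN : i < N := Nat.lt_of_succ_lt hi.1
    have : (⟨i, hiN⟩ : Fin N) ∈ Finset.univ.filter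
        (fun i : Fin N => ∃ j : Fin N, (j : ℕ) = (i : ℕ) + 1 ∧ σ j < σ i) := by
      rw [Finset.mem_filter]
      exact ⟨Finset.mem_univ _, (mem_des_iff σ ⟨i, hiN⟩).mpr hi⟩
    rw [ha, Finset.mem_singleton] at this
    exact congrArg Fin.val this
  · rintro ⟨p, hp, hu⟩
    have hpN : p < N := Nat.lt_of_succ_lt hp.1
    refine ⟨⟨p, hpN⟩, ?_⟩
    ext x
    rw [Finset.mem_filter, Finset.mem_singleton]
    constructor
    · rintro ⟨-, hx⟩
      exact Fin.ext (hu x.val ((mem_des_iff σ x).mp hx))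
    · rintro rfl
      exact ⟨Finset.mem_univ _, (mem_des_iff σ ⟨p, hpN⟩).mpr hp⟩

lemma odos_iff {N : ℕ} (σ : Equiv.Perm (Fin N)) (k : ℕ) :
    oneDescentOfSize σ k ↔
      ∃ p, dAt σ p ∧ (∀ i, dAt σ i → i = p) ∧ sv σ p = sv σ (p + 1) + k := by
  constructor
  · rintro ⟨hdes, i, j, hij, hlt, hsz⟩
    rw [des_eq_one_iff] at hdes
    obtain ⟨p, hp, hu⟩ := hdes
    have hdi : dAt σ i.val := (mem_des_iff σ i).mp ⟨j, hij, hlt⟩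
    have hip : i.val = p := hu i.val hdi
    refine ⟨p, hp, hu, ?_⟩
    have hj : j = ⟨i.val + 1, hdi.1⟩ := Fin.ext hij
    subst hip
    have e1 : sv σ i.val = (σ i).val := sv_apply σ i
    have e2 : sv σ (i.val + 1) = (σ j).val := by rw [← hij]; exact sv_apply σ j
    rw [e1, e2]; exact hsz
  · rintro ⟨p, hp, hu, hsz⟩
    have hpN : p < N := Nat.lt_of_succ_lt hp.1
    refine ⟨(des_eq_one_iff σ).mpr ⟨p, hp, hu⟩, ⟨p, hpN⟩, ⟨p + 1, hp.1⟩, rfl, ?_, ?_⟩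
    · rw [Fin.lt_def]
      have h2 := hp.2
      rw [sv_mk σ hpN, sv_mk σ hp.1] at h2
      exact h2
    · have h2 := hsz
      rw [sv_mk σ hpN, sv_mk σ hp.1] at h2
      exact h2


section Mono

variable {N : ℕ} (σ : Equiv.Perm (Fin N)) {p : ℕ}

lemma incr (hu : ∀ i, dAt σ i → i = p) {i : ℕ} (h1 : i + 1 < N) (h2 : i ≠ p) :
    sv σ i < sv σ (i + 1) := by
  have hnd : ¬ dAt σ i := fun hd => h2 (hu i hd)
  have hne : sv σ i ≠ sv σ (i + 1) := by
    intro h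
    exact absurd (sv_inj σ (Nat.lt_of_succ_lt h1) h1 h) (by omega)
  unfold dAt at hnd
  omega

lemma mono_left (hu : ∀ i, dAt σ i → i = p) (hp : p + 1 < N) :
    ∀ y, y ≤ p → ∀ x, x ≤ y → sv σ x + (y - x) ≤ sv σ y := by
  intro y
  induction y with
  | zero =>
    intro _ x hx
    have : x = 0 := by omega
    subst this; omega
  | succ y IH =>
    intro hyp x hx
    rcases Nat.eq_or_lt_of_le hx with h | h
    · subst h; omega
    · have hxy : x ≤ y := by omega
      have h1 : y + 1 < N := by omega
      have h2 : sv σ y < sv σ (y + 1) := incr σ hu h1 (by omega)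
      have := IH (by omega) x hxy
      omega

lemma mono_right (hu : ∀ i, dAt σ i → i = p) :
    ∀ y, y < N → ∀ x, p + 1 ≤ x → x ≤ y → sv σ x + (y - x) ≤ sv σ y := by
  intro y
  induction y with
  | zero =>
    intro _ x _ hx
    have : x = 0 := by omega
    subst this; omega
  | succ y IH =>
    intro hyN x hpx hx
    rcases Nat.eq_or_lt_of_le hx with h | h
    · subst h; omega
    · have hxy : x ≤ y := by omega
      have h2 : sv σ y < sv σ (y + 1) := incr σ hu hyN (by omega)
      have := IH (by omega) x hpx hxy
      omega

lemma sv_ge_left (hu : ∀ i, dAt σ i → i = p) (hp : p + 1 < N) {x : ℕ} (hx : x ≤ p) :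
    x ≤ sv σ x := by
  have := mono_left σ hu hp x hx 0 (Nat.zero_le _)
  omega

lemma sv_le_right (hu : ∀ i, dAt σ i → i = p) {x : ℕ} (hx1 : p + 1 ≤ x) (hx2 : x < N) :
    sv σ x ≤ x := by
  have h1 := mono_right σ hu (N - 1) (by omega) x hx1 (by omega)
  have h2 : sv σ (N - 1) < N := sv_lt σ (by omega)
  omega

end Mono

/-- Master structure lemma for a permutation with a unique descent of size `k`. -/
lemma master {N k : ℕ} {σ : Equiv.Perm (Fin N)} (h : oneDescentOfSize σ k) :
    ∃ p m : ℕ, p + 1 < N ∧ m ≤ p ∧ m + k < N ∧ sv σ (p + 1) = m ∧ sv σ p = m + k ∧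
      (∀ i, dAt σ i → i = p) ∧
      (∀ x, x < m → sv σ x = x) ∧
      (∀ x, m + k < x → x < N → sv σ x = x) ∧
      (∀ x, m ≤ x → x ≤ m + k → (m ≤ sv σ x ∧ sv σ x ≤ m + k ∧ sv σ x ≠ x)) := by
  obtain ⟨p, hp, hu, hsz⟩ := (odos_iff σ k).mp h
  set m := sv σ (p + 1) with hm
  have hp1 : p + 1 < N := hp.1
  have hpN : p < N := by omega
  have hmk : m + k < N := by
    have := sv_lt σ hpN
    omega
  have hmN : m < N := by omega
  -- every x < m is fixed
  have fix_low : ∀ x, x < m → sv σ x = x := by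
    intro x
    induction x using Nat.strong_induction_on with
    | _ x IH =>
      intro hxm
      obtain ⟨z, hzN, hz⟩ := sv_surj σ (show x < N by omega)
      by_cases hzp : z ≤ p
      · have hzz : z ≤ sv σ z := sv_ge_left σ hu hp1 hzp
        have hzx : ¬ z < x := by
          intro hlt
          have := IH z hlt (by omega)
          omega
        have hzx2 : z = x := by omega
        rw [hzx2] at hz
        omega
      · have : p + 1 ≤ z := by omega
        have := mono_right σ hu z hzN (p + 1) le_rfl this
        omega
  have hmp : m ≤ p := by
    by_contra hc
    have := fix_low p (by omega)
    omega
  -- every x > m + k is fixed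
  have fix_high : ∀ x, m + k < x → x < N → sv σ x = x := by
    have key : ∀ d x, N - x = d → m + k < x → x < N → sv σ x = x := by
      intro d
      induction d using Nat.strong_induction_on with
      | _ d IH =>
        intro x hd hx1 hx2
        obtain ⟨z, hzN, hz⟩ := sv_surj σ hx2
        by_cases hzp : z ≤ p
        · exfalso
          have := mono_left σ hu hp1 p le_rfl z hzp
          omega
        · have hzz : sv σ z ≤ z := sv_le_right σ hu (by omega) hzN
          have hxz : ¬ x < z := by
            intro hlt
            have := IH (N - z) (by omega) z rfl (by omega) hzN
            omega
          have hzx2 : z = x := by omega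
          rw [hzx2] at hz
          omega
    intro x hx1 hx2
    exact key (N - x) x rfl hx1 hx2
  refine ⟨p, m, hp1, hmp, hmk, rfl, hsz, hu, fix_low, fix_high, ?_⟩
  intro x hx1 hx2
  have hxN : x < N := by omega
  have hin1 : m ≤ sv σ x := by
    by_contra hc
    push_neg at hc
    have := fix_low (sv σ x) hc
    have := sv_inj σ (sv_lt σ hxN) hxN this
    omega
  have hin2 : sv σ x ≤ m + k := by
    by_contra hc
    push_neg at hc
    have := fix_high (sv σ x) hc (sv_lt σ hxN)
    have := sv_inj σ (sv_lt σ hxN) hxN this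
    omega
  refine ⟨hin1, hin2, ?_⟩
  intro hfix
  by_cases hxp : x ≤ p
  · -- interval [0, x] is invariant, but value m sits at position p+1 > x
    have hmaps : ∀ y ∈ Finset.range (x + 1), sv σ y ∈ Finset.range (x + 1) := by
      intro y hy
      rw [Finset.mem_range] at hy ⊢
      by_cases hym : y < m
      · rw [fix_low y hym]; omega
      · have := mono_left σ hu hp1 x hxp y (by omega)
        omega
    have himg : (Finset.range (x + 1)).image (sv σ) = Finset.range (x + 1) := by
      apply Finset.eq_of_subset_of_card_le
      · intro v hv
        rw [Finset.mem_image] at hv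
        obtain ⟨y, hy, rfl⟩ := hv
        exact hmaps y hy
      · rw [Finset.card_image_of_injOn]
        intro a ha b hb hab
        simp only [Finset.coe_range, Set.mem_Iio] at ha hb
        exact sv_inj σ (by omega) (by omega) hab
    have hmmem : m ∈ (Finset.range (x + 1)).image (sv σ) := by
      rw [himg, Finset.mem_range]; omega
    rw [Finset.mem_image] at hmmem
    obtain ⟨y, hy, hyv⟩ := hmmem
    rw [Finset.mem_range] at hy
    have : y = p + 1 := sv_inj σ (by omega) hp1 (by rw [hyv])
    omega
  · -- interval [x, N-1] is invariant, but value m+k sits at position p < x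
    have hmaps : ∀ y ∈ Finset.Icc x (N - 1), sv σ y ∈ Finset.Icc x (N - 1) := by
      intro y hy
      rw [Finset.mem_Icc] at hy ⊢
      have hyN : y < N := by omega
      constructor
      · have := mono_right σ hu y hyN x (by omega) hy.1
        omega
      · have := sv_lt σ hyN
        omega
    have himg : (Finset.Icc x (N - 1)).image (sv σ) = Finset.Icc x (N - 1) := by
      apply Finset.eq_of_subset_of_card_le
      · intro v hv
        rw [Finset.mem_image] at hv
        obtain ⟨y, hy, rfl⟩ := hv
        exact hmaps y hy
      · rw [Finset.card_image_of_injOn]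
        intro a ha b hb hab
        simp only [Finset.coe_Icc, Set.mem_Icc] at ha hb
        exact sv_inj σ (by omega) (by omega) hab
    have hmmem : m + k ∈ (Finset.Icc x (N - 1)).image (sv σ) := by
      rw [himg, Finset.mem_Icc]; omega
    rw [Finset.mem_image] at hmmem
    obtain ⟨y, hy, hyv⟩ := hmmem
    rw [Finset.mem_Icc] at hy
    have : y = p := sv_inj σ (by omega) hpN (by rw [hyv, hsz])
    omega

/-- A permutation of `Fin (k+1)` whose unique descent has size `k` has no fixed points. -/
lemma block_nfp {k : ℕ} {ρ : Equiv.Perm (Fin (k + 1))} (h : oneDescentOfSize ρ k) :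
    ∀ x, x < k + 1 → sv ρ x ≠ x := by
  obtain ⟨p, m, hp1, hmp, hmk, hm1, hm2, hu, fl, fh, nfp⟩ := master h
  have hm0 : m = 0 := by omega
  intro x hx
  exact (nfp x (by omega) (by omega)).2.2

section Glue

variable (n k : ℕ)

/-- embedding of complement index into `Fin n` positions -/
def cmN (m u : ℕ) : ℕ := if u < m then u else u + (k + 1)

/-- inverse of `cmN` -/
def cinvN (m y : ℕ) : ℕ := if y < m then y else y - (k + 1)

/-- the glued function at the level of naturals -/
def gfN (m : ℕ) (bv tv : ℕ → ℕ) (x : ℕ) : ℕ :=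
  if x < m then cmN k m (tv x)
  else if x < m + (k + 1) then m + bv (x - m)
  else cmN k m (tv (x - (k + 1)))

variable {n k}

lemma cmN_lt {m u : ℕ} (hm : m + k + 1 ≤ n) (hu : u < n - k - 1) : cmN k m u < n := by
  unfold cmN; split <;> omega

lemma cmN_inj {m u v : ℕ} (hm : m + k + 1 ≤ n) (h : cmN k m u = cmN k m v) : u = v := by
  unfold cmN at h; split at h <;> split at h <;> omega

lemma cinv_cm {m u : ℕ} (hm : m + k + 1 ≤ n) (hu : u < n - k - 1) :
    cinvN k m (cmN k m u) = u := by
  unfold cmN cinvN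
  by_cases h : u < m
  · rw [if_pos h, if_pos h]
  · rw [if_neg h, if_neg (show ¬ u + (k + 1) < m by omega)]
    omega

lemma cm_cinv {m y : ℕ} (hm : m + k + 1 ≤ n) (hy : y < n) (hC : y < m ∨ m + k < y) :
    cmN k m (cinvN k m y) = y := by
  unfold cinvN cmN
  by_cases h : y < m
  · rw [if_pos h, if_pos h]
  · rw [if_neg h, if_neg (show ¬ y - (k + 1) < m by omega)]
    omega

lemma cinvN_lt {m y : ℕ} (hm : m + k + 1 ≤ n) (hy : y < n) (hC : y < m ∨ m + k < y) :
    cinvN k m y < n - k - 1 := by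
  unfold cinvN; split <;> omega

section gfNlem

variable {m : ℕ} {bv tv : ℕ → ℕ} (hm : m + k + 1 ≤ n)
  (hbv : ∀ i, i < k + 1 → bv i < k + 1) (htv : ∀ j, j < n - k - 1 → tv j < n - k - 1)

include hm hbv htv in
lemma gfN_lt {x : ℕ} (hx : x < n) : gfN k m bv tv x < n := by
  unfold gfN
  by_cases h1 : x < m
  · rw [if_pos h1]
    exact cmN_lt hm (htv x (by omega))
  · rw [if_neg h1]
    by_cases h2 : x < m + (k + 1)
    · rw [if_pos h2]
      have := hbv (x - m) (by omega)
      omega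
    · rw [if_neg h2]
      exact cmN_lt hm (htv (x - (k + 1)) (by omega))

include hm hbv htv in
lemma gfN_comp {bv' tv' : ℕ → ℕ} {x : ℕ} (hx : x < n) :
    gfN k m bv' tv' (gfN k m bv tv x) = gfN k m (fun i => bv' (bv i)) (fun j => tv' (tv j)) x := by
  unfold gfN cmN
  beta_reduce
  by_cases h1 : x < m
  · rw [if_pos h1, if_pos h1]
    have hu : tv x < n - k - 1 := htv x (by omega)
    by_cases h2 : tv x < m
    · rw [if_pos h2, if_pos h2]
    · rw [if_neg h2, if_neg (show ¬ tv x + (k + 1) < m by omega),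
        if_neg (show ¬ tv x + (k + 1) < m + (k + 1) by omega),
        Nat.add_sub_cancel]
  · rw [if_neg h1, if_neg h1]
    by_cases h2 : x < m + (k + 1)
    · rw [if_pos h2, if_pos h2]
      have hb : bv (x - m) < k + 1 := hbv (x - m) (by omega)
      rw [if_neg (show ¬ m + bv (x - m) < m by omega),
        if_pos (show m + bv (x - m) < m + (k + 1) by omega), Nat.add_sub_cancel_left]
    · rw [if_neg h2, if_neg h2]
      have hu : tv (x - (k + 1)) < n - k - 1 := htv (x - (k + 1)) (by omega)
      by_cases h3 : tv (x - (k + 1)) < m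
      · rw [if_pos h3, if_pos h3]
      · rw [if_neg h3, if_neg (show ¬ tv (x - (k + 1)) + (k + 1) < m by omega),
          if_neg (show ¬ tv (x - (k + 1)) + (k + 1) < m + (k + 1) by omega),
          Nat.add_sub_cancel]

include hm in
lemma gfN_congr {bv' tv' : ℕ → ℕ} {x : ℕ} (hx : x < n)
    (h1 : ∀ i, i < k + 1 → bv i = bv' i) (h2 : ∀ j, j < n - k - 1 → tv j = tv' j) :
    gfN k m bv tv x = gfN k m bv' tv' x := by
  unfold gfN
  by_cases hx1 : x < m
  · rw [if_pos hx1, if_pos hx1, h2 x (by omega)]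
  · rw [if_neg hx1, if_neg hx1]
    by_cases hx2 : x < m + (k + 1)
    · rw [if_pos hx2, if_pos hx2, h1 (x - m) (by omega)]
    · rw [if_neg hx2, if_neg hx2, h2 (x - (k + 1)) (by omega)]

include hm in
lemma gfN_id {x : ℕ} (hx : x < n) : gfN k m (fun i => i) (fun j => j) x = x := by
  unfold gfN cmN
  beta_reduce
  by_cases h1 : x < m
  · rw [if_pos h1, if_pos h1]
  · rw [if_neg h1]
    by_cases h2 : x < m + (k + 1)
    · rw [if_pos h2]; omega
    · rw [if_neg h2, if_neg (show ¬ x - (k + 1) < m by omega)]; omega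

end gfNlem

lemma sv_lt' {N : ℕ} (σ : Equiv.Perm (Fin N)) {i : ℕ} (h : i < N) : sv σ i < N := sv_lt σ h

lemma sv_one {N : ℕ} {j : ℕ} (hj : j < N) : sv (1 : Equiv.Perm (Fin N)) j = j := by
  simp [sv, hj]

lemma sv_mul {N : ℕ} (a b : Equiv.Perm (Fin N)) {j : ℕ} (hj : j < N) :
    sv a (sv b j) = sv (a * b) j := by
  rw [sv_mk b hj, sv_mk (a * b) hj]
  rw [sv_apply a (b ⟨j, hj⟩)]
  rfl

/-- the glued permutation, assuming the block fits -/
def glueAux {m : ℕ} (hm : m + k + 1 ≤ n) (β : Equiv.Perm (Fin (k + 1)))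
    (τ : Equiv.Perm (Fin (n - k - 1))) : Equiv.Perm (Fin n) where
  toFun x := ⟨gfN k m (sv β) (sv τ) x.val,
    gfN_lt hm (fun i hi => sv_lt' β hi) (fun j hj => sv_lt' τ hj) x.isLt⟩
  invFun x := ⟨gfN k m (sv β⁻¹) (sv τ⁻¹) x.val,
    gfN_lt hm (fun i hi => sv_lt' β⁻¹ hi) (fun j hj => sv_lt' τ⁻¹ hj) x.isLt⟩
  left_inv := by
    intro x
    apply Fin.ext
    show gfN k m (sv β⁻¹) (sv τ⁻¹) (gfN k m (sv β) (sv τ) x.val) = x.val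
    rw [gfN_comp hm (fun i hi => sv_lt' β hi) (fun j hj => sv_lt' τ hj) x.isLt]
    rw [gfN_congr hm x.isLt
      (fun i hi => by rw [sv_mul β⁻¹ β hi, inv_mul_cancel, sv_one hi])
      (fun j hj => by rw [sv_mul τ⁻¹ τ hj, inv_mul_cancel, sv_one hj])]
    exact gfN_id hm x.isLt
  right_inv := by
    intro x
    apply Fin.ext
    show gfN k m (sv β) (sv τ) (gfN k m (sv β⁻¹) (sv τ⁻¹) x.val) = x.val
    rw [gfN_comp hm (fun i hi => sv_lt' β⁻¹ hi) (fun j hj => sv_lt' τ⁻¹ hj) x.isLt]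
    rw [gfN_congr hm x.isLt
      (fun i hi => by rw [sv_mul β β⁻¹ hi, mul_inv_cancel, sv_one hi])
      (fun j hj => by rw [sv_mul τ τ⁻¹ hj, mul_inv_cancel, sv_one hj])]
    exact gfN_id hm x.isLt

variable (n k) in
/-- the glued permutation (total version) -/
def glue (m : ℕ) (β : Equiv.Perm (Fin (k + 1))) (τ : Equiv.Perm (Fin (n - k - 1))) :
    Equiv.Perm (Fin n) :=
  if h : m + k + 1 ≤ n then glueAux h β τ else 1

lemma glue_val {m : ℕ} (hm : m + k + 1 ≤ n) (β : Equiv.Perm (Fin (k + 1)))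
    (τ : Equiv.Perm (Fin (n - k - 1))) (x : Fin n) :
    ((glue n k m β τ) x).val = gfN k m (sv β) (sv τ) x.val := by
  unfold glue
  rw [dif_pos hm]
  rfl

lemma glue_mul {m : ℕ} (hm : m + k + 1 ≤ n) (β₂ β₁ : Equiv.Perm (Fin (k + 1)))
    (τ₂ τ₁ : Equiv.Perm (Fin (n - k - 1))) :
    glue n k m β₂ τ₂ * glue n k m β₁ τ₁ = glue n k m (β₂ * β₁) (τ₂ * τ₁) := by
  apply Equiv.ext
  intro x
  apply Fin.ext
  rw [Equiv.Perm.mul_apply, glue_val hm, glue_val hm, glue_val hm]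
  rw [gfN_comp hm (fun i hi => sv_lt' β₁ hi) (fun j hj => sv_lt' τ₁ hj) x.isLt]
  exact gfN_congr hm x.isLt
    (fun i hi => sv_mul β₂ β₁ hi)
    (fun j hj => sv_mul τ₂ τ₁ hj)

lemma glue_sv {m : ℕ} (hm : m + k + 1 ≤ n) (β : Equiv.Perm (Fin (k + 1)))
    (τ : Equiv.Perm (Fin (n - k - 1))) {x : ℕ} (hx : x < n) :
    sv (glue n k m β τ) x = gfN k m (sv β) (sv τ) x := by
  rw [sv_mk _ hx]
  exact glue_val hm β τ ⟨x, hx⟩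

lemma glue_sv_low {m : ℕ} (hm : m + k + 1 ≤ n) (β : Equiv.Perm (Fin (k + 1)))
    (τ : Equiv.Perm (Fin (n - k - 1))) {x : ℕ} (hx : x < m) :
    sv (glue n k m β τ) x = cmN k m (sv τ x) := by
  rw [glue_sv hm β τ (by omega)]
  unfold gfN
  rw [if_pos hx]

lemma glue_sv_block {m : ℕ} (hm : m + k + 1 ≤ n) (β : Equiv.Perm (Fin (k + 1)))
    (τ : Equiv.Perm (Fin (n - k - 1))) {x : ℕ} (hx1 : m ≤ x) (hx2 : x < m + k + 1) :
    sv (glue n k m β τ) x = m + sv β (x - m) := by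
  rw [glue_sv hm β τ (by omega)]
  unfold gfN
  rw [if_neg (by omega), if_pos (by omega)]

lemma glue_sv_high {m : ℕ} (hm : m + k + 1 ≤ n) (β : Equiv.Perm (Fin (k + 1)))
    (τ : Equiv.Perm (Fin (n - k - 1))) {x : ℕ} (hx1 : m + k + 1 ≤ x) (hx2 : x < n) :
    sv (glue n k m β τ) x = cmN k m (sv τ (x - (k + 1))) := by
  rw [glue_sv hm β τ hx2]
  unfold gfN
  rw [if_neg (by omega), if_neg (by omega)]

lemma glue_sv_low1 {m : ℕ} (hm : m + k + 1 ≤ n) (β : Equiv.Perm (Fin (k + 1)))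
    {x : ℕ} (hx : x < m) : sv (glue n k m β 1) x = x := by
  rw [glue_sv_low hm β 1 hx, sv_one (show x < n - k - 1 by omega)]
  unfold cmN
  rw [if_pos hx]

lemma glue_sv_high1 {m : ℕ} (hm : m + k + 1 ≤ n) (β : Equiv.Perm (Fin (k + 1)))
    {x : ℕ} (hx1 : m + k < x) (hx2 : x < n) : sv (glue n k m β 1) x = x := by
  rw [glue_sv_high hm β 1 (by omega) hx2, sv_one (show x - (k + 1) < n - k - 1 by omega)]
  unfold cmN
  rw [if_neg (by omega)]
  omega

lemma glue_dAt_iff {m : ℕ} (hm : m + k + 1 ≤ n) (ρ : Equiv.Perm (Fin (k + 1))) (i : ℕ) :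
    dAt (glue n k m ρ 1) i ↔ (m ≤ i ∧ i + 1 ≤ m + k ∧ dAt ρ (i - m)) := by
  constructor
  · rintro ⟨h1, h2⟩
    by_cases c1 : i < m
    · exfalso
      rw [glue_sv_low1 hm ρ c1] at h2
      by_cases c2 : i + 1 < m
      · rw [glue_sv_low1 hm ρ c2] at h2; omega
      · have him : i + 1 = m := by omega
        rw [glue_sv_block (x := i + 1) hm ρ 1 (by omega) (by omega)] at h2
        omega
    · by_cases c2 : i + 1 ≤ m + k
      · refine ⟨by omega, c2, ?_⟩
        rw [glue_sv_block (x := i) hm ρ 1 (by omega) (by omega),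
          glue_sv_block (x := i + 1) hm ρ 1 (by omega) (by omega)] at h2
        have e : i + 1 - m = (i - m) + 1 := by omega
        rw [e] at h2
        exact ⟨by omega, by omega⟩
      · exfalso
        by_cases c3 : i ≤ m + k
        · have : i = m + k := by omega
          rw [glue_sv_block (x := i) hm ρ 1 (by omega) (by omega),
            glue_sv_high1 (x := i + 1) hm ρ (by omega) h1] at h2
          have := sv_lt' ρ (show i - m < k + 1 by omega)
          omega
        · rw [glue_sv_high1 (x := i) hm ρ (by omega) (by omega),
            glue_sv_high1 (x := i + 1) hm ρ (by omega) h1] at h2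
          omega
  · rintro ⟨h1, h2, h3, h4⟩
    refine ⟨by omega, ?_⟩
    rw [glue_sv_block (x := i) hm ρ 1 (by omega) (by omega),
      glue_sv_block (x := i + 1) hm ρ 1 (by omega) (by omega)]
    have e : i + 1 - m = (i - m) + 1 := by omega
    rw [e]
    omega

lemma glue_odos_iff {m : ℕ} (hm : m + k + 1 ≤ n) (ρ : Equiv.Perm (Fin (k + 1))) :
    oneDescentOfSize (glue n k m ρ 1) k ↔ oneDescentOfSize ρ k := by
  rw [odos_iff, odos_iff]
  constructor
  · rintro ⟨q, hq, hu, hsz⟩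
    obtain ⟨hq1, hq2, hq3⟩ := (glue_dAt_iff hm ρ q).mp hq
    refine ⟨q - m, hq3, ?_, ?_⟩
    · intro i hi
      have hiq : m + i = q := hu (m + i) ((glue_dAt_iff hm ρ (m + i)).mpr
        ⟨by omega, by have := hi.1; omega, by rw [Nat.add_sub_cancel_left]; exact hi⟩)
      omega
    · rw [glue_sv_block (x := q) hm ρ 1 (by omega) (by omega),
        glue_sv_block (x := q + 1) hm ρ 1 (by omega) (by omega)] at hsz
      have e : q + 1 - m = (q - m) + 1 := by omega
      rw [e] at hsz
      omega
  · rintro ⟨p', hp', hu', hsz'⟩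
    have hpk : p' + 1 < k + 1 := hp'.1
    refine ⟨m + p', (glue_dAt_iff hm ρ (m + p')).mpr
      ⟨by omega, by omega, by rw [Nat.add_sub_cancel_left]; exact hp'⟩, ?_, ?_⟩
    · intro i hi
      obtain ⟨h1, h2, h3⟩ := (glue_dAt_iff hm ρ i).mp hi
      have := hu' (i - m) h3
      omega
    · rw [glue_sv_block (x := m + p') hm ρ 1 (by omega) (by omega),
        glue_sv_block (x := m + p' + 1) hm ρ 1 (by omega) (by omega), Nat.add_sub_cancel_left]
      have e : m + p' + 1 - m = p' + 1 := by omega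
      rw [e]
      omega

end Glue

section Recon

variable {n k : ℕ}

lemma cmC {m : ℕ} (j : ℕ) : cmN k m j < m ∨ m + k < cmN k m j := by
  unfold cmN; split
  · left; assumption
  · right; omega

/-- Reconstruction: every `π` whose square has one descent of size `k` is a glue. -/
lemma recon (π : Equiv.Perm (Fin n)) (h : oneDescentOfSize (π * π) k) :
    ∃ (m : ℕ) (β : Equiv.Perm (Fin (k + 1))) (τ : Equiv.Perm (Fin (n - k - 1))),
      m + k + 1 ≤ n ∧ τ * τ = 1 ∧ oneDescentOfSize (β * β) k ∧ π = glue n k m β τ := by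
  obtain ⟨p, m, hp1, hmp, hmk, hpm1, hpm2, hu, fl, fh, nfp⟩ := master h
  have hm : m + k + 1 ≤ n := by omega
  have σfix : ∀ x : Fin n, (x.val < m ∨ m + k < x.val) → (π * π) x = x := by
    intro x hx
    apply Fin.ext
    rw [← sv_apply (π * π) x]
    rcases hx with hx | hx
    · exact fl x.val hx
    · exact fh x.val hx x.isLt
  have σnfp : ∀ x : Fin n, m ≤ x.val → x.val ≤ m + k → (π * π) x ≠ x := by
    intro x h1 h2 he
    apply (nfp x.val h1 h2).2.2
    rw [sv_apply (π * π) x, he]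
  have πC : ∀ x : Fin n, (x.val < m ∨ m + k < x.val) →
      ((π x).val < m ∨ m + k < (π x).val) := by
    intro x hx
    by_contra hc
    push_neg at hc
    have h1 : π (π x) = x := by
      have := σfix x hx; rwa [Equiv.Perm.mul_apply] at this
    have h2 : (π * π) (π x) = π x := by rw [Equiv.Perm.mul_apply, h1]
    exact σnfp (π x) hc.1 hc.2 h2
  have himg : (Finset.univ.filter (fun x : Fin n => x.val < m ∨ m + k < x.val)).image π
      = Finset.univ.filter (fun x : Fin n => x.val < m ∨ m + k < x.val) := by
    apply Finset.eq_of_subset_of_card_le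
    · intro y hy
      rw [Finset.mem_image] at hy
      obtain ⟨x, hx, rfl⟩ := hy
      rw [Finset.mem_filter] at hx ⊢
      exact ⟨Finset.mem_univ _, πC x hx.2⟩
    · exact le_of_eq (Finset.card_image_of_injective _ π.injective).symm
  have πB : ∀ x : Fin n, m ≤ x.val → x.val ≤ m + k →
      (m ≤ (π x).val ∧ (π x).val ≤ m + k) := by
    intro x h1 h2
    by_cases hc : (π x).val < m ∨ m + k < (π x).val
    · exfalso
      have hxmem : π x ∈ (Finset.univ.filter
          (fun x : Fin n => x.val < m ∨ m + k < x.val)).image π := by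
        rw [himg, Finset.mem_filter]; exact ⟨Finset.mem_univ _, hc⟩
      rw [Finset.mem_image] at hxmem
      obtain ⟨y, hy, hyx⟩ := hxmem
      have : y = x := π.injective hyx
      subst this
      rw [Finset.mem_filter] at hy
      omega
    · push_neg at hc; exact hc
  have πinvB : ∀ x : Fin n, m ≤ x.val → x.val ≤ m + k →
      (m ≤ (π⁻¹ x).val ∧ (π⁻¹ x).val ≤ m + k) := by
    intro x h1 h2
    by_cases hc : (π⁻¹ x).val < m ∨ m + k < (π⁻¹ x).val
    · exfalso
      have := πC (π⁻¹ x) hc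
      rw [Equiv.Perm.coe_inv, Equiv.apply_symm_apply] at this
      omega
    · push_neg at hc; exact hc
  -- the block permutation
  have hfinj : Function.Injective (fun i : Fin (k + 1) =>
      (⟨(π ⟨m + i.val, by have := i.isLt; omega⟩).val - m, by
        have h := πB ⟨m + i.val, by have := i.isLt; omega⟩
          (by show m ≤ m + i.val; omega) (by show m + i.val ≤ m + k; have := i.isLt; omega)
        omega⟩ : Fin (k + 1))) := by
    intro i j hij
    have hbi := πB ⟨m + i.val, by have := i.isLt; omega⟩
      (by show m ≤ m + i.val; omega) (by show m + i.val ≤ m + k; have := i.isLt; omega)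
    have hbj := πB ⟨m + j.val, by have := j.isLt; omega⟩
      (by show m ≤ m + j.val; omega) (by show m + j.val ≤ m + k; have := j.isLt; omega)
    have hv : (π ⟨m + i.val, by have := i.isLt; omega⟩).val
        = (π ⟨m + j.val, by have := j.isLt; omega⟩).val := by
      have := congrArg Fin.val hij
      simp only at this
      omega
    have := π.injective (Fin.ext hv)
    have := congrArg Fin.val this
    simp only at this
    exact Fin.ext (by omega)
  let β : Equiv.Perm (Fin (k + 1)) :=
    Equiv.ofBijective _ (Finite.injective_iff_bijective.mp hfinj)
  have hβ : ∀ i : Fin (k + 1), (β i).val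
      = (π ⟨m + i.val, by have := i.isLt; omega⟩).val - m := fun i => rfl
  -- the complement permutation
  have hcmF : ∀ j : Fin (n - k - 1), cmN k m j.val < n := fun j => cmN_lt hm j.isLt
  have hgb : ∀ j : Fin (n - k - 1), cinvN k m ((π ⟨cmN k m j.val, hcmF j⟩).val) < n - k - 1 := by
    intro j
    exact cinvN_lt hm (π _).isLt (πC _ (cmC j.val))
  have hginj : Function.Injective (fun j : Fin (n - k - 1) =>
      (⟨cinvN k m ((π ⟨cmN k m j.val, hcmF j⟩).val), hgb j⟩ : Fin (n - k - 1))) := by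
    intro i j hij
    have hv : cinvN k m ((π ⟨cmN k m i.val, hcmF i⟩).val)
        = cinvN k m ((π ⟨cmN k m j.val, hcmF j⟩).val) := congrArg Fin.val hij
    have e1 := cm_cinv hm (π ⟨cmN k m i.val, hcmF i⟩).isLt (πC _ (cmC i.val))
    have e2 := cm_cinv hm (π ⟨cmN k m j.val, hcmF j⟩).isLt (πC _ (cmC j.val))
    have : (π ⟨cmN k m i.val, hcmF i⟩).val = (π ⟨cmN k m j.val, hcmF j⟩).val := by
      rw [← e1, ← e2, hv]
    have := π.injective (Fin.ext this)
    have := congrArg Fin.val this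
    simp only at this
    exact Fin.ext (cmN_inj hm this)
  let τ : Equiv.Perm (Fin (n - k - 1)) :=
    Equiv.ofBijective _ (Finite.injective_iff_bijective.mp hginj)
  have hτ : ∀ j : Fin (n - k - 1), (τ j).val
      = cinvN k m ((π ⟨cmN k m j.val, hcmF j⟩).val) := fun j => rfl
  have hτ' : ∀ (j : ℕ) (hj : j < n - k - 1),
      sv τ j = cinvN k m ((π ⟨cmN k m j, cmN_lt hm hj⟩).val) := by
    intro j hj
    rw [sv_mk τ hj, hτ ⟨j, hj⟩]
  have hβ' : ∀ (i : ℕ) (hi : i < k + 1),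
      sv β i = (π ⟨m + i, by omega⟩).val - m := by
    intro i hi
    rw [sv_mk β hi, hβ ⟨i, hi⟩]
  have hττ : τ * τ = 1 := by
    apply Equiv.ext
    intro j
    apply Fin.ext
    rw [Equiv.Perm.mul_apply, Equiv.Perm.one_apply, hτ (τ j)]
    have hxC := cmC (k := k) (m := m) j.val
    have hyC := πC ⟨cmN k m j.val, hcmF j⟩ hxC
    have e1 : (⟨cmN k m ((τ j).val), hcmF (τ j)⟩ : Fin n) = π ⟨cmN k m j.val, hcmF j⟩ := by
      apply Fin.ext
      show cmN k m ((τ j).val) = _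
      rw [hτ j]
      exact cm_cinv hm (π ⟨cmN k m j.val, hcmF j⟩).isLt hyC
    rw [e1]
    have e2 : π (π ⟨cmN k m j.val, hcmF j⟩) = ⟨cmN k m j.val, hcmF j⟩ := by
      have := σfix ⟨cmN k m j.val, hcmF j⟩ hxC
      rwa [Equiv.Perm.mul_apply] at this
    rw [e2]
    exact cinv_cm hm j.isLt
  have hglue : π = glue n k m β τ := by
    apply Equiv.ext
    intro x
    apply Fin.ext
    rw [glue_val hm β τ x]
    unfold gfN
    by_cases h1 : x.val < m
    · rw [if_pos h1, hτ' x.val (by omega)]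
      have hxeq : (⟨cmN k m x.val, cmN_lt hm (show x.val < n - k - 1 by omega)⟩ : Fin n) = x := by
        apply Fin.ext
        show cmN k m x.val = x.val
        unfold cmN
        rw [if_pos h1]
      rw [hxeq, cm_cinv hm (π x).isLt (πC x (Or.inl h1))]
    · rw [if_neg h1]
      by_cases h2 : x.val < m + (k + 1)
      · rw [if_pos h2, hβ' (x.val - m) (by omega)]
        have hxeq : (⟨m + (x.val - m), by omega⟩ : Fin n) = x := by
          apply Fin.ext
          show m + (x.val - m) = x.val
          omega
        rw [hxeq]
        have := πB x (by omega) (by omega)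
        omega
      · rw [if_neg h2, hτ' (x.val - (k + 1)) (by omega)]
        have hxeq : (⟨cmN k m (x.val - (k + 1)),
            cmN_lt hm (show x.val - (k + 1) < n - k - 1 by omega)⟩ : Fin n) = x := by
          apply Fin.ext
          show cmN k m (x.val - (k + 1)) = x.val
          unfold cmN
          rw [if_neg (by omega)]
          omega
        rw [hxeq, cm_cinv hm (π x).isLt (πC x (Or.inr (by omega)))]
  have hββ : oneDescentOfSize (β * β) k := by
    have hππ : π * π = glue n k m (β * β) 1 := by
      rw [hglue, glue_mul hm, hττ]
    exact (glue_odos_iff hm (β * β)).mp (hππ ▸ h)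
  exact ⟨m, β, τ, hm, hττ, hββ, hglue⟩

end Recon

section Final

variable {n k : ℕ}

lemma glue_ne_m {m₁ m₂ : ℕ} (h1 : m₁ + k + 1 ≤ n) (h2 : m₂ + k + 1 ≤ n)
    {ρ₁ ρ₂ : Equiv.Perm (Fin (k + 1))} (hρ₁ : oneDescentOfSize ρ₁ k)
    (hlt : m₁ < m₂) (heq : glue n k m₁ ρ₁ 1 = glue n k m₂ ρ₂ 1) : False := by
  have e1 : sv (glue n k m₁ ρ₁ 1) m₁ = m₁ + sv ρ₁ 0 := by
    rw [glue_sv_block (x := m₁) h1 ρ₁ 1 le_rfl (by omega), Nat.sub_self]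
  have e2 : sv (glue n k m₂ ρ₂ 1) m₁ = m₁ := glue_sv_low1 h2 ρ₂ hlt
  rw [heq, e2] at e1
  exact block_nfp hρ₁ 0 (by omega) (by omega)

lemma glue_inj_full {m₁ m₂ : ℕ} (h1 : m₁ + k + 1 ≤ n) (h2 : m₂ + k + 1 ≤ n)
    {β₁ β₂ : Equiv.Perm (Fin (k + 1))} {τ₁ τ₂ : Equiv.Perm (Fin (n - k - 1))}
    (hβ₁ : oneDescentOfSize (β₁ * β₁) k) (hβ₂ : oneDescentOfSize (β₂ * β₂) k)
    (hτ₁ : τ₁ * τ₁ = 1) (hτ₂ : τ₂ * τ₂ = 1)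
    (heq : glue n k m₁ β₁ τ₁ = glue n k m₂ β₂ τ₂) :
    m₁ = m₂ ∧ β₁ = β₂ ∧ τ₁ = τ₂ := by
  have hsq : glue n k m₁ (β₁ * β₁) 1 = glue n k m₂ (β₂ * β₂) 1 := by
    have e := congrArg (fun g => g * g) heq
    rw [glue_mul h1, glue_mul h2, hτ₁, hτ₂] at e
    exact e
  have hmm : m₁ = m₂ := by
    rcases lt_trichotomy m₁ m₂ with h | h | h
    · exact absurd (glue_ne_m h1 h2 hβ₁ h hsq) (fun a => a)
    · exact h
    · exact absurd (glue_ne_m h2 h1 hβ₂ h hsq.symm) (fun a => a)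
  subst hmm
  refine ⟨rfl, ?_, ?_⟩
  · apply Equiv.ext
    intro i
    apply Fin.ext
    have e := congrArg (fun ρ => sv ρ (m₁ + i.val)) heq
    rw [glue_sv_block (x := m₁ + i.val) h1 β₁ τ₁ (by omega) (by have := i.isLt; omega),
      glue_sv_block (x := m₁ + i.val) h2 β₂ τ₂ (by omega) (by have := i.isLt; omega),
      Nat.add_sub_cancel_left, sv_mk β₁ i.isLt, sv_mk β₂ i.isLt] at e
    simp only [Fin.eta] at e
    omega
  · apply Equiv.ext
    intro j
    apply Fin.ext
    by_cases hj : j.val < m₁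
    · have e := congrArg (fun ρ => sv ρ j.val) heq
      rw [glue_sv_low h1 β₁ τ₁ hj, glue_sv_low h2 β₂ τ₂ hj] at e
      have := cmN_inj h1 e
      rw [sv_mk τ₁ j.isLt, sv_mk τ₂ j.isLt] at this
      simp only [Fin.eta] at this
      exact this
    · have e := congrArg (fun ρ => sv ρ (j.val + (k + 1))) heq
      have hjb : j.val + (k + 1) < n := by have := j.isLt; omega
      rw [glue_sv_high h1 β₁ τ₁ (by omega) hjb, glue_sv_high h2 β₂ τ₂ (by omega) hjb,
        Nat.add_sub_cancel] at e
      have := cmN_inj h1 e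
      rw [sv_mk τ₁ j.isLt, sv_mk τ₂ j.isLt] at this
      simp only [Fin.eta] at this
      exact this

end Final

end SqProof

open SqProof

/-- The number of `π ∈ S_n` whose square has exactly one descent, of size `k`,
equals `(n−k) · b_k · e(n−k−1)`. -/
theorem count_square_one_descent_of_size (n k : ℕ) (hn : 3 ≤ n)
    (hk2 : 2 ≤ k) (hkn : k ≤ n - 1) :
    (Finset.univ.filter (fun π : Equiv.Perm (Fin n) =>
        oneDescentOfSize (π * π) k)).card
      = (n - k) *
        (Finset.univ.filter (fun β : Equiv.Perm (Fin (k + 1)) =>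
          oneDescentOfSize (β * β) k)).card *
        numInvolutions (n - k - 1) := by
  have hkn' : k + 1 ≤ n := by omega
  have hcard : ((Finset.range (n - k)) ×ˢ
      ((Finset.univ.filter (fun β : Equiv.Perm (Fin (k + 1)) =>
          oneDescentOfSize (β * β) k)) ×ˢ
        (Finset.univ.filter (fun τ : Equiv.Perm (Fin (n - k - 1)) => τ * τ = 1)))).card
      = (Finset.univ.filter (fun π : Equiv.Perm (Fin n) =>
          oneDescentOfSize (π * π) k)).card := by
    apply Finset.card_bij (fun a _ => glue n k a.1 a.2.1 a.2.2)
    · rintro ⟨m, β, τ⟩ ha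
      simp only [Finset.mem_product, Finset.mem_filter, Finset.mem_range,
        Finset.mem_univ, true_and] at ha
      obtain ⟨ham, haβ, haτ⟩ := ha
      have hm : m + k + 1 ≤ n := by omega
      rw [Finset.mem_filter]
      refine ⟨Finset.mem_univ _, ?_⟩
      rw [glue_mul hm, haτ]
      exact (glue_odos_iff hm (β * β)).mpr haβ
    · rintro ⟨m₁, β₁, τ₁⟩ h₁ ⟨m₂, β₂, τ₂⟩ h₂ heq
      simp only [Finset.mem_product, Finset.mem_filter, Finset.mem_range,
        Finset.mem_univ, true_and] at h₁ h₂
      obtain ⟨hm₁, hβ₁, hτ₁⟩ := h₁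
      obtain ⟨hm₂, hβ₂, hτ₂⟩ := h₂
      obtain ⟨e1, e2, e3⟩ := glue_inj_full (by omega) (by omega) hβ₁ hβ₂ hτ₁ hτ₂ heq
      simp only [Prod.mk.injEq]
      exact ⟨e1, e2, e3⟩
    · intro π hπ
      rw [Finset.mem_filter] at hπ
      obtain ⟨m, β, τ, hm, hττ, hββ, hglue⟩ := recon π hπ.2
      refine ⟨(m, β, τ), ?_, hglue.symm⟩
      simp only [Finset.mem_product, Finset.mem_filter, Finset.mem_range,
        Finset.mem_univ, true_and]
      exact ⟨by omega, hββ, hττ⟩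
  rw [← hcard, Finset.card_product, Finset.card_product, Finset.card_range]
  rw [mul_assoc]
  rfl
end

section
/- The number of permutations π ∈ S_n with π² equal to the decreasing permutation n(n−1)...21 is (2m)!/m! if n = 4m or n = 4m+1 for some nonnegative integer m, and 0 otherwise (i.e., when n ≡ 2 or 3 mod 4). -/
namespace SqrtRev

def rv {n : ℕ} (i : Fin n) : Fin n := ⟨n - 1 - (i : ℕ), by have := i.isLt; omega⟩

@[simp] lemma rv_val {n : ℕ} (i : Fin n) : (rv i : ℕ) = n - 1 - (i : ℕ) := rfl

lemma rv_rv {n : ℕ} (i : Fin n) : rv (rv i) = i := by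
  apply Fin.ext; have := i.isLt; simp; omega

def SR (n : ℕ) : Finset (Equiv.Perm (Fin n)) :=
  Finset.univ.filter (fun π => ∀ i : Fin n, ((π * π) i : ℕ) = n - 1 - (i : ℕ))

lemma mem_SR {n : ℕ} {π : Equiv.Perm (Fin n)} :
    π ∈ SR n ↔ ∀ i, π (π i) = rv i := by
  rw [SR, Finset.mem_filter]; simp only [Finset.mem_univ, true_and, Equiv.Perm.mul_apply, Fin.ext_iff, rv_val]

section
variable {n : ℕ} {π : Equiv.Perm (Fin (n + 4))}

lemma comm_rv (hπ : ∀ i, π (π i) = rv i) (i : Fin (n + 4)) : π (rv i) = rv (π i) := by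
  calc π (rv i) = π (π (π i)) := by rw [hπ i]
  _ = rv (π i) := hπ (π i)

lemma pi0_ne_zero (hπ : ∀ i, π (π i) = rv i) : (π ⟨0, by omega⟩ : Fin (n+4)) ≠ ⟨0, by omega⟩ := by
  intro h
  have h2 : (⟨0, by omega⟩ : Fin (n+4)) = rv ⟨0, by omega⟩ := by
    calc (⟨0, by omega⟩ : Fin (n+4)) = π (π ⟨0, by omega⟩) := by rw [h, h]
    _ = rv ⟨0, by omega⟩ := hπ _
  have := congrArg Fin.val h2
  simp at this

lemma pi0_ne_last (hπ : ∀ i, π (π i) = rv i) : (π ⟨0, by omega⟩ : Fin (n+4)) ≠ ⟨n+3, by omega⟩ := by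
  intro h
  have e1 : π (⟨n+3, by omega⟩ : Fin (n+4)) = ⟨n+3, by omega⟩ := by
    calc π (⟨n+3, by omega⟩ : Fin (n+4)) = π (π ⟨0, by omega⟩) := by rw [h]
    _ = rv ⟨0, by omega⟩ := hπ _
    _ = ⟨n+3, by omega⟩ := by apply Fin.ext; simp
  have e2 : (⟨n+3, by omega⟩ : Fin (n+4)) = rv ⟨n+3, by omega⟩ := by
    calc (⟨n+3, by omega⟩ : Fin (n+4)) = π (π ⟨n+3, by omega⟩) := by rw [e1, e1]
    _ = rv ⟨n+3, by omega⟩ := hπ _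
  have := congrArg Fin.val e2
  simp at this

lemma pi0_ne_rv (hπ : ∀ i, π (π i) = rv i) :
    (π ⟨0, by omega⟩ : Fin (n+4)) ≠ rv (π ⟨0, by omega⟩) := by
  intro h
  have h2 : rv (⟨0, by omega⟩ : Fin (n+4)) = ⟨0, by omega⟩ := by
    calc rv (⟨0, by omega⟩ : Fin (n+4)) = π (π ⟨0, by omega⟩) := (hπ _).symm
    _ = π (rv (π ⟨0, by omega⟩)) := by rw [← h]
    _ = rv (π (π ⟨0, by omega⟩)) := comm_rv hπ _
    _ = rv (rv ⟨0, by omega⟩) := by rw [hπ]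
    _ = ⟨0, by omega⟩ := rv_rv _
  have := congrArg Fin.val h2
  simp at this

end

section
variable {n : ℕ}

def tauFun (a : Fin (n+4)) (x : Fin (n+4)) : Fin (n+4) :=
  if x = ⟨1, by omega⟩ then a
  else if x = a then ⟨1, by omega⟩
  else if x = ⟨n+2, by omega⟩ then rv a
  else if x = rv a then ⟨n+2, by omega⟩
  else x

variable {a : Fin (n+4)} (h0 : (a : ℕ) ≠ 0) (hl : (a : ℕ) ≠ n+3) (ha : (a : ℕ) ≠ n + 3 - (a : ℕ))

include h0 hl ha

lemma tauFun_invol (x : Fin (n+4)) : tauFun a (tauFun a x) = x := by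
  have hx := x.isLt; have ha' := a.isLt
  simp only [tauFun]
  split_ifs <;> first | rfl | (simp only [Fin.ext_iff, rv_val, not_true] at *; try first | omega | contradiction)

lemma tauFun_rv (x : Fin (n+4)) : tauFun a (rv x) = rv (tauFun a x) := by
  have hx := x.isLt; have ha' := a.isLt
  simp only [tauFun]
  split_ifs <;> first | rfl | (simp only [Fin.ext_iff, rv_val, not_true] at *; try first | omega | contradiction)

lemma tauFun_zero : tauFun a ⟨0, by omega⟩ = ⟨0, by omega⟩ := by
  have ha' := a.isLt
  simp only [tauFun]
  split_ifs <;> first | rfl | (simp only [Fin.ext_iff, rv_val, not_true] at *; try first | omega | contradiction)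

lemma tauFun_one : tauFun a ⟨1, by omega⟩ = a := by
  have ha' := a.isLt
  simp only [tauFun]
  split_ifs <;> first | rfl | (simp only [Fin.ext_iff, rv_val, not_true] at *; try first | omega | contradiction)

lemma tauFun_a : tauFun a a = ⟨1, by omega⟩ := by
  have ha' := a.isLt
  simp only [tauFun]
  split_ifs <;> first | rfl | (simp only [Fin.ext_iff, rv_val, not_true] at *; try first | omega | contradiction)

def tau : Equiv.Perm (Fin (n+4)) :=
  ⟨tauFun a, tauFun a, tauFun_invol h0 hl ha, tauFun_invol h0 hl ha⟩

@[simp] lemma tau_apply (x : Fin (n+4)) : tau h0 hl ha x = tauFun a x := rfl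

lemma fiber_card :
    ((SR (n+4)).filter (fun π => π ⟨0, by omega⟩ = a)).card
      = ((SR (n+4)).filter (fun π => π ⟨0, by omega⟩ = ⟨1, by omega⟩)).card := by
  have key : ∀ π : Equiv.Perm (Fin (n+4)), π ∈ SR (n+4) →
      (tau h0 hl ha * π * tau h0 hl ha) ∈ SR (n+4) := by
    intro π hπ
    rw [mem_SR] at hπ ⊢
    intro i
    simp only [Equiv.Perm.mul_apply, tau_apply]
    rw [tauFun_invol h0 hl ha, hπ, tauFun_rv h0 hl ha, tauFun_invol h0 hl ha]
  have cancel : ∀ π : Equiv.Perm (Fin (n+4)),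
      (tau h0 hl ha * (tau h0 hl ha * π * tau h0 hl ha) * tau h0 hl ha) = π := by
    intro π
    ext x
    simp only [Equiv.Perm.mul_apply, tau_apply]
    rw [tauFun_invol h0 hl ha, tauFun_invol h0 hl ha]
  apply Finset.card_bij' (i := fun π _ => tau h0 hl ha * π * tau h0 hl ha)
    (j := fun π _ => tau h0 hl ha * π * tau h0 hl ha)
  · intro π hπ
    rw [Finset.mem_filter] at hπ ⊢
    refine ⟨key π hπ.1, ?_⟩
    simp only [Equiv.Perm.mul_apply, tau_apply, tauFun_zero h0 hl ha, hπ.2, tauFun_a h0 hl ha]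
  · intro π hπ
    rw [Finset.mem_filter] at hπ ⊢
    refine ⟨key π hπ.1, ?_⟩
    simp only [Equiv.Perm.mul_apply, tau_apply, tauFun_zero h0 hl ha, hπ.2, tauFun_one h0 hl ha]
  · intro π _; exact cancel π
  · intro π _; exact cancel π

end

def Aset (n : ℕ) : Finset (Fin (n+4)) :=
  Finset.univ.filter (fun a => (a : ℕ) ≠ 0 ∧ (a : ℕ) ≠ n+3 ∧ (a : ℕ) ≠ n + 3 - (a : ℕ))

lemma card_Aset (n : ℕ) : (Aset n).card = if n % 2 = 0 then n + 2 else n + 1 := by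
  by_cases h : n % 2 = 0
  · rw [if_pos h]
    have e : Aset n = Finset.univ \ {⟨0, by omega⟩, ⟨n+3, by omega⟩} := by
      ext x
      have := x.isLt
      simp only [Aset, Finset.mem_filter, Finset.mem_univ, true_and, Finset.mem_sdiff, Finset.mem_insert, Finset.mem_singleton, Fin.ext_iff]
      omega
    rw [e, Finset.card_sdiff_of_subset (Finset.subset_univ _)]
    have h2 : ({⟨0, by omega⟩, ⟨n+3, by omega⟩} : Finset (Fin (n+4))).card = 2 := by
      rw [Finset.card_insert_of_notMem (by simp [Fin.ext_iff]), Finset.card_singleton]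
    rw [h2]
    simp
  · rw [if_neg h]
    have e : Aset n = Finset.univ \ {⟨0, by omega⟩, ⟨n+3, by omega⟩, ⟨(n+3)/2, by omega⟩} := by
      ext x
      have := x.isLt
      simp only [Aset, Finset.mem_filter, Finset.mem_univ, true_and, Finset.mem_sdiff, Finset.mem_insert, Finset.mem_singleton, Fin.ext_iff]
      omega
    rw [e, Finset.card_sdiff_of_subset (Finset.subset_univ _)]
    have h2 : ({⟨0, by omega⟩, ⟨n+3, by omega⟩, ⟨(n+3)/2, by omega⟩} : Finset (Fin (n+4))).card = 3 := by
      rw [Finset.card_insert_of_notMem (by simp [Fin.ext_iff]; omega),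
        Finset.card_insert_of_notMem (by simp [Fin.ext_iff]; omega), Finset.card_singleton]
    rw [h2]
    simp

lemma SR_card_split (n : ℕ) :
    (SR (n+4)).card = (if n % 2 = 0 then n + 2 else n + 1) *
      ((SR (n+4)).filter (fun π => π ⟨0, by omega⟩ = ⟨1, by omega⟩)).card := by
  have step : ∀ π ∈ SR (n+4), (π ⟨0, by omega⟩ : Fin (n+4)) ∈ Aset n := by
    intro π hπ
    have hπ' := mem_SR.mp hπ
    simp only [Aset, Finset.mem_filter, Finset.mem_univ, true_and]
    refine ⟨?_, ?_, ?_⟩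
    · have := pi0_ne_zero hπ'; simp only [Ne, Fin.ext_iff] at this; simpa using this
    · have := pi0_ne_last hπ'; simp only [Ne, Fin.ext_iff] at this; simpa using this
    · have := pi0_ne_rv hπ'; simp only [Ne, Fin.ext_iff, rv_val] at this; simpa using this
  rw [Finset.card_eq_sum_card_fiberwise (f := fun π => π ⟨0, Nat.zero_lt_succ _⟩) (t := Aset n) (by intro π hπ; exact step π hπ)]
  rw [Finset.sum_congr rfl (fun a haA => by
    simp only [Aset, Finset.mem_filter] at haA
    exact fiber_card haA.2.1 haA.2.2.1 haA.2.2.2)]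
  rw [Finset.sum_const, smul_eq_mul, card_Aset]

section
variable {n : ℕ} {π : Equiv.Perm (Fin (n + 4))}
  (hπ : ∀ i, π (π i) = rv i) (h0 : π ⟨0, by omega⟩ = ⟨1, by omega⟩)

include hπ h0

lemma pi_one : π ⟨1, by omega⟩ = ⟨n+3, by omega⟩ := by
  calc π ⟨1, by omega⟩ = π (π ⟨0, by omega⟩) := by rw [h0]
  _ = rv ⟨0, by omega⟩ := hπ _
  _ = ⟨n+3, by omega⟩ := by apply Fin.ext; simp

lemma pi_last : π ⟨n+3, by omega⟩ = ⟨n+2, by omega⟩ := by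
  calc π ⟨n+3, by omega⟩ = π (π ⟨1, by omega⟩) := by rw [pi_one hπ h0]
  _ = rv ⟨1, by omega⟩ := hπ _
  _ = ⟨n+2, by omega⟩ := by apply Fin.ext; simp

lemma pi_slast : π ⟨n+2, by omega⟩ = ⟨0, by omega⟩ := by
  calc π ⟨n+2, by omega⟩ = π (π ⟨n+3, by omega⟩) := by rw [pi_last hπ h0]
  _ = rv ⟨n+3, by omega⟩ := hπ _
  _ = ⟨0, by omega⟩ := by apply Fin.ext; simp

lemma pi_mid : ∀ x : Fin (n+4), 2 ≤ (x:ℕ) → (x:ℕ) ≤ n+1 →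
    2 ≤ (π x : ℕ) ∧ (π x : ℕ) ≤ n+1 := by
  intro x hx2 hxn
  have hlt := (π x).isLt
  have e0 : π x ≠ ⟨0, by omega⟩ := by
    intro e
    have hv := congrArg Fin.val (π.injective (e.trans (pi_slast hπ h0).symm))
    simp at hv
    omega
  have e1 : π x ≠ ⟨1, by omega⟩ := by
    intro e
    have hv := congrArg Fin.val (π.injective (e.trans h0.symm))
    dsimp only at hv
    omega
  have e2 : π x ≠ ⟨n+2, by omega⟩ := by
    intro e
    have hv := congrArg Fin.val (π.injective (e.trans (pi_last hπ h0).symm))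
    simp at hv
    omega
  have e3 : π x ≠ ⟨n+3, by omega⟩ := by
    intro e
    have hv := congrArg Fin.val (π.injective (e.trans (pi_one hπ h0).symm))
    simp at hv
    omega
  simp only [Ne, Fin.ext_iff] at e0 e1 e2 e3
  omega

end

section
variable {n : ℕ}

noncomputable def toSmall (π : Equiv.Perm (Fin (n+4)))
    (hmid : ∀ x : Fin (n+4), 2 ≤ (x:ℕ) → (x:ℕ) ≤ n+1 → 2 ≤ (π x : ℕ) ∧ (π x : ℕ) ≤ n+1) :
    Equiv.Perm (Fin n) :=
  Equiv.ofBijective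
    (fun j => ⟨(π ⟨(j:ℕ)+2, by have := j.isLt; omega⟩ : ℕ) - 2, by
      have hj := j.isLt
      have h := hmid ⟨(j:ℕ)+2, by omega⟩ (by simp) (by simp)
      omega⟩)
    (by
      rw [← Finite.injective_iff_bijective]
      intro j k h
      have hj := j.isLt; have hk := k.isLt
      have hv := congrArg Fin.val h
      simp only at hv
      have hbj := hmid ⟨(j:ℕ)+2, by omega⟩ (by simp) (by simp)
      have hbk := hmid ⟨(k:ℕ)+2, by omega⟩ (by simp) (by simp)
      have e : π ⟨(j:ℕ)+2, by omega⟩ = π ⟨(k:ℕ)+2, by omega⟩ := by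
        apply Fin.ext; omega
      have := congrArg Fin.val (π.injective e)
      simp at this
      apply Fin.ext; omega)

lemma toSmall_val (π : Equiv.Perm (Fin (n+4))) (hmid) (j : Fin n) :
    ((toSmall π hmid) j : ℕ) = (π ⟨(j:ℕ)+2, by have := j.isLt; omega⟩ : ℕ) - 2 := rfl

def pFun (σ : Equiv.Perm (Fin n)) (x : Fin (n+4)) : Fin (n+4) :=
  if h1 : (x:ℕ) = 0 then ⟨1, by omega⟩
  else if h2 : (x:ℕ) = 1 then ⟨n+3, by omega⟩
  else if h3 : (x:ℕ) = n+3 then ⟨n+2, by omega⟩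
  else if h4 : (x:ℕ) = n+2 then ⟨0, by omega⟩
  else ⟨(σ ⟨(x:ℕ)-2, by have := x.isLt; omega⟩ : ℕ) + 2, by
    have := (σ ⟨(x:ℕ)-2, by have := x.isLt; omega⟩).isLt; omega⟩

def qFun (σ : Equiv.Perm (Fin n)) (x : Fin (n+4)) : Fin (n+4) :=
  if h1 : (x:ℕ) = 1 then ⟨0, by omega⟩
  else if h2 : (x:ℕ) = n+3 then ⟨1, by omega⟩
  else if h3 : (x:ℕ) = n+2 then ⟨n+3, by omega⟩
  else if h4 : (x:ℕ) = 0 then ⟨n+2, by omega⟩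
  else ⟨(σ.symm ⟨(x:ℕ)-2, by have := x.isLt; omega⟩ : ℕ) + 2, by
    have := (σ.symm ⟨(x:ℕ)-2, by have := x.isLt; omega⟩).isLt; omega⟩

@[simp] lemma val_mk' {m a : ℕ} (h : a < m) : ((⟨a, h⟩ : Fin m) : ℕ) = a := rfl

section
variable {σ : Equiv.Perm (Fin n)}

lemma pFun_zero : pFun σ ⟨0, by omega⟩ = ⟨1, by omega⟩ := by
  simp only [pFun]
  split_ifs <;> simp_all

lemma pFun_one : pFun σ ⟨1, by omega⟩ = ⟨n+3, by omega⟩ := by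
  simp only [pFun]
  split_ifs <;> simp_all

lemma pFun_last : pFun σ ⟨n+3, by omega⟩ = ⟨n+2, by omega⟩ := by
  simp only [pFun]
  split_ifs <;> first | rfl | (apply Fin.ext; simp_all) | (exfalso; simp_all; omega)

lemma pFun_slast : pFun σ ⟨n+2, by omega⟩ = ⟨0, by omega⟩ := by
  simp only [pFun]
  split_ifs <;> first | rfl | (apply Fin.ext; simp_all) | (exfalso; simp_all; omega)

lemma pFun_mid (y : Fin n) :
    pFun σ ⟨(y:ℕ)+2, by have := y.isLt; omega⟩
      = ⟨((σ y : ℕ))+2, by have := (σ y).isLt; omega⟩ := by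
  have hy := y.isLt
  simp only [pFun]
  split_ifs <;> first
    | (apply Fin.ext; simp only [val_mk', Nat.add_sub_cancel, Fin.eta]; done)
    | (exfalso; simp_all; try omega)

lemma qFun_zero : qFun σ ⟨0, by omega⟩ = ⟨n+2, by omega⟩ := by
  simp only [qFun]
  split_ifs <;> first | rfl | (apply Fin.ext; simp_all) | (exfalso; simp_all; omega)

lemma qFun_one : qFun σ ⟨1, by omega⟩ = ⟨0, by omega⟩ := by
  simp only [qFun]
  split_ifs <;> simp_all

lemma qFun_last : qFun σ ⟨n+3, by omega⟩ = ⟨1, by omega⟩ := by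
  simp only [qFun]
  split_ifs <;> first | rfl | (apply Fin.ext; simp_all) | (exfalso; simp_all; omega)

lemma qFun_slast : qFun σ ⟨n+2, by omega⟩ = ⟨n+3, by omega⟩ := by
  simp only [qFun]
  split_ifs <;> first | rfl | (apply Fin.ext; simp_all) | (exfalso; simp_all; omega)

lemma qFun_mid (y : Fin n) :
    qFun σ ⟨(y:ℕ)+2, by have := y.isLt; omega⟩
      = ⟨((σ.symm y : ℕ))+2, by have := (σ.symm y).isLt; omega⟩ := by
  have hy := y.isLt
  simp only [qFun]
  split_ifs <;> first
    | (apply Fin.ext; simp only [val_mk', Nat.add_sub_cancel, Fin.eta]; done)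
    | (exfalso; simp_all; try omega)

lemma fin_cases5 (x : Fin (n+4)) :
    x = ⟨0, by omega⟩ ∨ x = ⟨1, by omega⟩ ∨ x = ⟨n+3, by omega⟩ ∨ x = ⟨n+2, by omega⟩ ∨
      ∃ y : Fin n, x = ⟨(y:ℕ)+2, by have := y.isLt; omega⟩ := by
  have hx := x.isLt
  by_cases h0 : (x:ℕ) = 0
  · exact Or.inl (Fin.ext h0)
  by_cases h1 : (x:ℕ) = 1
  · exact Or.inr (Or.inl (Fin.ext h1))
  by_cases h2 : (x:ℕ) = n+3
  · exact Or.inr (Or.inr (Or.inl (Fin.ext h2)))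
  by_cases h3 : (x:ℕ) = n+2
  · exact Or.inr (Or.inr (Or.inr (Or.inl (Fin.ext h3))))
  refine Or.inr (Or.inr (Or.inr (Or.inr ⟨⟨(x:ℕ)-2, by omega⟩, Fin.ext ?_⟩)))
  simp
  omega

lemma qp (σ : Equiv.Perm (Fin n)) (x : Fin (n+4)) : qFun σ (pFun σ x) = x := by
  rcases fin_cases5 x with h | h | h | h | ⟨y, h⟩ <;> subst h
  · rw [pFun_zero, qFun_one]
  · rw [pFun_one, qFun_last]
  · rw [pFun_last, qFun_slast]
  · rw [pFun_slast, qFun_zero]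
  · rw [pFun_mid, qFun_mid]; simp only [Equiv.symm_apply_apply]

lemma pq (σ : Equiv.Perm (Fin n)) (x : Fin (n+4)) : pFun σ (qFun σ x) = x := by
  rcases fin_cases5 x with h | h | h | h | ⟨y, h⟩ <;> subst h
  · rw [qFun_zero, pFun_slast]
  · rw [qFun_one, pFun_zero]
  · rw [qFun_last, pFun_one]
  · rw [qFun_slast, pFun_last]
  · rw [qFun_mid, pFun_mid]; simp only [Equiv.apply_symm_apply]

end

def toBig (σ : Equiv.Perm (Fin n)) : Equiv.Perm (Fin (n+4)) :=
  ⟨pFun σ, qFun σ, qp σ, pq σ⟩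

@[simp] lemma toBig_apply (σ : Equiv.Perm (Fin n)) (x : Fin (n+4)) :
    toBig σ x = pFun σ x := rfl

lemma toSmall_shift (π : Equiv.Perm (Fin (n+4)))
    (hmid : ∀ x : Fin (n+4), 2 ≤ (x:ℕ) → (x:ℕ) ≤ n+1 → 2 ≤ (π x : ℕ) ∧ (π x : ℕ) ≤ n+1)
    (y : Fin n) :
    π ⟨(y:ℕ)+2, by have := y.isLt; omega⟩
      = ⟨((toSmall π hmid) y : ℕ) + 2, by have := ((toSmall π hmid) y).isLt; omega⟩ := by
  have hy := y.isLt
  have hb := hmid ⟨(y:ℕ)+2, by omega⟩ (by simp) (by simp)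
  apply Fin.ext
  simp only [val_mk']
  rw [toSmall_val]
  omega

lemma toSmall_mem (π : Equiv.Perm (Fin (n+4))) (hπ : ∀ i, π (π i) = rv i)
    (hmid : ∀ x : Fin (n+4), 2 ≤ (x:ℕ) → (x:ℕ) ≤ n+1 → 2 ≤ (π x : ℕ) ∧ (π x : ℕ) ≤ n+1) :
    toSmall π hmid ∈ SR n := by
  rw [mem_SR]
  intro j
  have hj := j.isLt
  have s1 := toSmall_shift π hmid j
  have s2 := toSmall_shift π hmid ((toSmall π hmid) j)
  have key : (⟨((toSmall π hmid) ((toSmall π hmid) j) : ℕ) + 2,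
      by have := ((toSmall π hmid) ((toSmall π hmid) j)).isLt; omega⟩ : Fin (n+4))
      = rv ⟨(j:ℕ)+2, by omega⟩ := by
    rw [← s2, ← s1, hπ]
  have hv := congrArg Fin.val key
  simp only [val_mk', rv_val] at hv
  apply Fin.ext
  simp only [rv_val]
  omega

lemma toBig_mem (σ : Equiv.Perm (Fin n)) (hσ : σ ∈ SR n) : toBig σ ∈ SR (n+4) := by
  rw [mem_SR] at hσ ⊢
  intro x
  rcases fin_cases5 x with h | h | h | h | ⟨y, h⟩ <;> subst h <;>
    simp only [toBig_apply]
  · rw [pFun_zero, pFun_one]; apply Fin.ext; simp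
  · rw [pFun_one, pFun_last]; apply Fin.ext; simp
  · rw [pFun_last, pFun_slast]; apply Fin.ext; simp
  · rw [pFun_slast, pFun_zero]; apply Fin.ext; simp
  · rw [pFun_mid, pFun_mid]
    have hv := congrArg Fin.val (hσ y)
    have hy := y.isLt
    simp only [rv_val] at hv
    apply Fin.ext
    simp only [val_mk', rv_val]
    omega

lemma toBig_zero (σ : Equiv.Perm (Fin n)) : toBig σ ⟨0, by omega⟩ = ⟨1, by omega⟩ := by
  rw [toBig_apply]; exact pFun_zero

lemma big_small (π : Equiv.Perm (Fin (n+4))) (hπ : ∀ i, π (π i) = rv i)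
    (h0 : π ⟨0, by omega⟩ = ⟨1, by omega⟩) :
    toBig (toSmall π (pi_mid hπ h0)) = π := by
  apply Equiv.ext
  intro x
  rcases fin_cases5 x with h | h | h | h | ⟨y, h⟩ <;> subst h <;>
    simp only [toBig_apply]
  · rw [pFun_zero, h0]
  · rw [pFun_one, pi_one hπ h0]
  · rw [pFun_last, pi_last hπ h0]
  · rw [pFun_slast, pi_slast hπ h0]
  · rw [pFun_mid, toSmall_shift π (pi_mid hπ h0) y]

lemma small_big (σ : Equiv.Perm (Fin n)) (hmid) : toSmall (toBig σ) hmid = σ := by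
  apply Equiv.ext
  intro j
  apply Fin.ext
  rw [toSmall_val]
  have hy := j.isLt
  rw [toBig_apply, pFun_mid]
  simp

lemma fiber1_card (n : ℕ) :
    ((SR (n+4)).filter (fun π => π ⟨0, by omega⟩ = ⟨1, by omega⟩)).card = (SR n).card := by
  apply Finset.card_bij'
    (i := fun π h => toSmall π (pi_mid (mem_SR.mp (Finset.mem_filter.mp h).1)
      ((Finset.mem_filter.mp h).2)))
    (j := fun σ _ => toBig σ)
  case hi =>
    intro π h
    exact toSmall_mem π (mem_SR.mp (Finset.mem_filter.mp h).1) _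
  case hj =>
    intro σ hσ
    rw [Finset.mem_filter]
    exact ⟨toBig_mem σ hσ, toBig_zero σ⟩
  case left_inv =>
    intro π h
    exact big_small π (mem_SR.mp (Finset.mem_filter.mp h).1) ((Finset.mem_filter.mp h).2)
  case right_inv =>
    intro σ hσ
    exact small_big σ _


end

lemma SR_rec (n : ℕ) :
    (SR (n+4)).card = (if n % 2 = 0 then n + 2 else n + 1) * (SR n).card := by
  rw [SR_card_split, fiber1_card]

lemma SR_card : ∀ n : ℕ, (SR n).card =
    if n % 4 = 0 ∨ n % 4 = 1 then (2 * (n / 4)).factorial / (n / 4).factorial else 0 := by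
  intro n
  induction n using Nat.strong_induction_on with
  | _ n ih =>
    match n, ih with
    | 0, _ => decide
    | 1, _ => decide
    | 2, _ => decide
    | 3, _ => decide
    | (k+4), ih =>
      rw [SR_rec k, ih k (by omega)]
      rcases (by omega : k % 4 = 0 ∨ k % 4 = 1 ∨ k % 4 = 2 ∨ k % 4 = 3) with h | h | h | h
      · have hm : k = 4 * (k / 4) := by omega
        have h2 : k % 2 = 0 := by omega
        have h4 : (k + 4) % 4 = 0 := by omega
        have h5 : (k + 4) / 4 = k / 4 + 1 := by omega
        set m := k / 4 with hmdef
        obtain ⟨c, hc⟩ := Nat.factorial_dvd_factorial (show m ≤ 2 * m by omega)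
        have e1 : (2 * m).factorial / m.factorial = c := by
          rw [hc]; exact Nat.mul_div_cancel_left _ (Nat.factorial_pos m)
        have e2 : (2 * (m+1)).factorial = (m+1).factorial * ((4 * m + 2) * c) := by
          have e : 2 * (m + 1) = (2 * m + 1) + 1 := by ring
          rw [e, Nat.factorial_succ, Nat.factorial_succ, hc, Nat.factorial_succ]
          ring
        have e3 : (2 * (m+1)).factorial / (m+1).factorial = (4 * m + 2) * c := by
          rw [e2]; exact Nat.mul_div_cancel_left _ (Nat.factorial_pos (m+1))
        rw [if_pos h2, if_pos (show k % 4 = 0 ∨ k % 4 = 1 from Or.inl h),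
          if_pos (show (k+4) % 4 = 0 ∨ (k+4) % 4 = 1 from Or.inl (by omega)), h5, e1, e3]
        rw [show k + 2 = 4 * m + 2 by omega]
      · have hm : k = 4 * (k / 4) + 1 := by omega
        have h2 : k % 2 = 1 := by omega
        have h5 : (k + 4) / 4 = k / 4 + 1 := by omega
        set m := k / 4 with hmdef
        obtain ⟨c, hc⟩ := Nat.factorial_dvd_factorial (show m ≤ 2 * m by omega)
        have e1 : (2 * m).factorial / m.factorial = c := by
          rw [hc]; exact Nat.mul_div_cancel_left _ (Nat.factorial_pos m)
        have e2 : (2 * (m+1)).factorial = (m+1).factorial * ((4 * m + 2) * c) := by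
          have e : 2 * (m + 1) = (2 * m + 1) + 1 := by ring
          rw [e, Nat.factorial_succ, Nat.factorial_succ, hc, Nat.factorial_succ]
          ring
        have e3 : (2 * (m+1)).factorial / (m+1).factorial = (4 * m + 2) * c := by
          rw [e2]; exact Nat.mul_div_cancel_left _ (Nat.factorial_pos (m+1))
        rw [if_neg (show ¬ k % 2 = 0 by omega), if_pos (show k % 4 = 0 ∨ k % 4 = 1 from Or.inr h),
          if_pos (show (k+4) % 4 = 0 ∨ (k+4) % 4 = 1 from Or.inr (by omega)), h5, e1, e3]
        rw [show k + 1 = 4 * m + 2 by omega]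
      · rw [if_neg (show ¬ (k % 4 = 0 ∨ k % 4 = 1) by omega), mul_zero,
          if_neg (show ¬ ((k+4) % 4 = 0 ∨ (k+4) % 4 = 1) by omega)]
      · rw [if_neg (show ¬ (k % 4 = 0 ∨ k % 4 = 1) by omega), mul_zero,
          if_neg (show ¬ ((k+4) % 4 = 0 ∨ (k+4) % 4 = 1) by omega)]

end SqrtRev

/-- The number of square roots of the decreasing permutation `i ↦ n+1−i`
(0-indexed: `i ↦ n−1−i`) is `(2m)!/m!` when `n = 4m` or `n = 4m+1`, and `0` otherwise. -/
theorem count_square_roots_of_decreasing (n : ℕ) :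
    (Finset.univ.filter (fun π : Equiv.Perm (Fin n) =>
        ∀ i : Fin n, ((π * π) i : ℕ) = n - 1 - (i : ℕ))).card
      = if n % 4 = 0 ∨ n % 4 = 1 then (2 * (n / 4)).factorial / (n / 4).factorial
        else 0 := SqrtRev.SR_card n
end

section
/- The number of permutations π ∈ S_n with π³ equal to the decreasing permutation n(n−1)...21 equals the sum over i from 0 to ⌊n/6⌋ of C(⌊n/2⌋, 3i) · (3i)!/(i!·3^i) · 4^i. -/
/-- `ccc i = (3i)! / (i! * 3^i)` as an honest natural number. -/
def ccc : ℕ → ℕ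
  | 0 => 1
  | (i+1) => (3*i+2)*(3*i+1)*ccc i

lemma ccc_mul (i : ℕ) : ccc i * (i.factorial * 3^i) = (3*i).factorial := by
  induction i with
  | zero => simp [ccc]
  | succ i ih =>
      have h3 : 3*(i+1) = (3*i+2)+1 := by ring
      have h2 : 3*i+2 = (3*i+1)+1 := by ring
      rw [h3, Nat.factorial_succ, h2, Nat.factorial_succ, ← h2, Nat.factorial_succ,
        Nat.factorial_succ, pow_succ, ← ih]
      simp only [ccc]; ring

lemma ccc_div (i : ℕ) : (3*i).factorial / (i.factorial * 3^i) = ccc i :=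
  (Nat.div_eq_of_eq_mul_left (by positivity) (ccc_mul i).symm)

/-- The RHS counting function, in terms of `N = n/2`. -/
def gg (N : ℕ) : ℕ := ∑ i ∈ Finset.range (N+1), N.choose (3*i) * ccc i * 4^i

lemma gg_rec (m : ℕ) : gg (m+3) = gg (m+2) + 4*(m+2)*(m+1)*gg m := by
  have key : ∀ j, (m+2).choose (3*j+2) * ((3*j+2)*(3*j+1)) = (m+2)*((m+1)* (m).choose (3*j)) := by
    intro j
    have h1 := Nat.add_one_mul_choose_eq (m+1) (3*j+1)
    have h2 := Nat.add_one_mul_choose_eq m (3*j)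
    calc (m+2).choose (3*j+2) * ((3*j+2)*(3*j+1))
        = ((m+1+1).choose (3*j+1+1) * (3*j+1+1)) * (3*j+1) := by ring_nf
      _ = ((m+1+1) * (m+1).choose (3*j+1)) * (3*j+1) := by rw [← h1]
      _ = (m+2) * ((m+1).choose (3*j+1) * (3*j+1)) := by ring
      _ = (m+2) * ((m+1) * m.choose (3*j)) := by
            congr 1
            omega
  have hp : ∀ i : ℕ, (m+3).choose (3*(i+1)) = (m+2).choose (3*i+2) + (m+2).choose (3*(i+1)) := by
    intro i
    have h : 3*(i+1) = (3*i+2)+1 := by ring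
    have h' : (m+3) = (m+2)+1 := by ring
    rw [h, h', Nat.choose_succ_succ']
  have hterm : ∀ i : ℕ, (m+3).choose (3*(i+1)) * ccc (i+1) * 4^(i+1)
      = (m+2).choose (3*(i+1)) * ccc (i+1) * 4^(i+1)
        + (4*(m+2)*(m+1)) * (m.choose (3*i) * ccc i * 4^i) := by
    intro i
    rw [hp i, Nat.add_mul, Nat.add_mul, Nat.add_comm]
    congr 1
    calc (m+2).choose (3*i+2) * ccc (i+1) * 4^(i+1)
        = ((m+2).choose (3*i+2) * ((3*i+2)*(3*i+1))) * (ccc i * (4*4^i)) := by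
          simp only [ccc, pow_succ]; ring
      _ = ((m+2)*((m+1)* m.choose (3*i))) * (ccc i * (4*4^i)) := by rw [key i]
      _ = 4*(m+2)*(m+1) * (m.choose (3*i) * ccc i * 4^i) := by ring
  unfold gg
  rw [Finset.sum_range_succ' (fun i => (m+3).choose (3*i) * ccc i * 4^i) (m+3)]
  simp only [hterm]
  rw [Finset.sum_add_distrib]
  -- first piece
  have e1 : ∑ i ∈ Finset.range (m+3), (m+2).choose (3*(i+1)) * ccc (i+1) * 4^(i+1)
        + (m+3).choose (3*0) * ccc 0 * 4^0
      = ∑ i ∈ Finset.range (m+2+1), (m+2).choose (3*i) * ccc i * 4^i := by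
    rw [Finset.sum_range_succ' (fun i => (m+2).choose (3*i) * ccc i * 4^i) (m+2)]
    rw [Finset.sum_range_succ]
    have : (m+2).choose (3*(m+2+1)) = 0 := Nat.choose_eq_zero_of_lt (by omega)
    simp [this, ccc]
  -- second piece
  have e2 : ∑ i ∈ Finset.range (m+3), (4*(m+2)*(m+1)) * (m.choose (3*i) * ccc i * 4^i)
      = 4*(m+2)*(m+1) * ∑ i ∈ Finset.range (m+1), m.choose (3*i) * ccc i * 4^i := by
    rw [← Finset.mul_sum]
    congr 1
    rw [show m+3 = (m+1)+1+1 from rfl, Finset.sum_range_succ, Finset.sum_range_succ]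
    have z1 : m.choose (3*(m+1)) = 0 := Nat.choose_eq_zero_of_lt (by omega)
    have z2 : m.choose (3*(m+1+1)) = 0 := Nat.choose_eq_zero_of_lt (by omega)
    simp [z1, z2]
  omega

open Equiv Finset

def okC {α : Type} [DecidableEq α] [Fintype α] (p : Equiv.Perm α × (α → Bool)) : Prop :=
  p.1 ^ 3 = 1 ∧ ∀ i, xor (p.2 i) (xor (p.2 (p.1 i)) (p.2 (p.1 (p.1 i)))) = false

instance okC_dec {α : Type} [DecidableEq α] [Fintype α] :
    DecidablePred (okC (α := α)) := fun _ => by unfold okC; infer_instance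

def BB (α : Type) [DecidableEq α] [Fintype α] : ℕ :=
  (Finset.univ.filter (okC (α := α))).card

lemma pow_three_apply {α : Type} (σ : Equiv.Perm α) (x : α) : (σ^3) x = σ (σ (σ x)) := by
  simp [pow_succ, Equiv.Perm.mul_apply]

lemma pow_three_eq_one_iff {α : Type} (σ : Equiv.Perm α) :
    σ^3 = 1 ↔ ∀ x, σ (σ (σ x)) = x := by
  constructor
  · intro h x; rw [← pow_three_apply, h]; rfl
  · intro h; ext x; rw [pow_three_apply]; exact h x

lemma fix_part {α : Type} [DecidableEq α] [Fintype α] (a : α) :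
    ((Finset.univ.filter (okC (α := α))).filter (fun p => p.1 a = a)).card
      = BB {x : α // x ≠ a} := by
  unfold BB
  have pres : ∀ (σ : Equiv.Perm α), σ a = a → ∀ x : α, x ≠ a ↔ σ x ≠ a := by
    intro σ ha x
    constructor
    · intro hx h; exact hx (σ.injective (h.trans ha.symm))
    · intro hx h; exact hx (by rw [h, ha])
  refine Finset.card_bij'
    (fun (p : Equiv.Perm α × (α → Bool)) hp =>
      (p.1.subtypePerm (fun x => (pres p.1 (by simp only [mem_filter] at hp; exact hp.2) x).symm),
        fun x => p.2 x.1))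
    (fun (q : Equiv.Perm {x : α // x ≠ a} × ({x : α // x ≠ a} → Bool)) _ =>
      (Equiv.Perm.ofSubtype q.1,
        fun x => if h : x = a then false else q.2 ⟨x, h⟩)) ?_ ?_ ?_ ?_
  · -- forward membership
    intro p hp
    simp only [mem_filter, mem_univ, true_and] at hp ⊢
    obtain ⟨⟨h1, h2⟩, ha⟩ := hp
    constructor
    · rw [Equiv.Perm.subtypePerm_pow]
      ext x
      simp [Equiv.Perm.subtypePerm_apply, h1]
    · rintro ⟨x, hx⟩
      have := h2 x
      simpa [Equiv.Perm.subtypePerm_apply] using this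
  · -- backward membership
    intro q hq
    simp only [mem_filter, mem_univ, true_and] at hq ⊢
    obtain ⟨h1, h2⟩ := hq
    have hfixa : Equiv.Perm.ofSubtype q.1 a = a :=
      Equiv.Perm.ofSubtype_apply_of_not_mem q.1 (by simp)
    have happly : ∀ (x : α) (hx : x ≠ a), Equiv.Perm.ofSubtype q.1 x = (q.1 ⟨x, hx⟩).1 := by
      intro x hx; exact Equiv.Perm.ofSubtype_apply_of_mem q.1 hx
    refine ⟨⟨?_, ?_⟩, hfixa⟩
    · rw [← map_pow, h1, map_one]
    · intro x
      by_cases hx : x = a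
      · subst hx; simp [hfixa]
      · rw [happly x hx]
        have hne1 : ((q.1 ⟨x, hx⟩) : α) ≠ a := (q.1 ⟨x, hx⟩).2
        rw [happly _ hne1]
        have hne2 : ((q.1 (q.1 ⟨x, hx⟩)) : α) ≠ a := (q.1 (q.1 ⟨x, hx⟩)).2
        have := h2 ⟨x, hx⟩
        simp only [dif_neg hx, dif_neg hne1, dif_neg hne2]
        simpa using this
  · -- j ∘ i = id
    intro p hp
    simp only [mem_filter, mem_univ, true_and] at hp
    obtain ⟨⟨h1, h2⟩, ha⟩ := hp
    have hεa : p.2 a = false := by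
      have := h2 a
      simp only [ha] at this
      cases h : p.2 a <;> simp [h] at this ⊢
    refine Prod.ext ?_ ?_
    · exact Equiv.Perm.ofSubtype_subtypePerm (fun x => (pres p.1 ha x).symm) (fun x hx => by
        intro h; exact hx (by rw [h, ha]))
    · funext x
      by_cases hx : x = a
      · subst hx; simp [hεa]
      · simp [dif_neg hx]
  · -- i ∘ j = id
    intro q hq
    refine Prod.ext ?_ ?_
    · simp [Equiv.Perm.subtypePerm_ofSubtype]
    · funext x
      have hx : (x : α) ≠ a := x.2
      simp [dif_neg hx]

lemma okC_map {α β : Type} [DecidableEq α] [Fintype α] [DecidableEq β] [Fintype β]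
    (e : α ≃ β) (p : Equiv.Perm α × (α → Bool)) (h : okC p) :
    okC (e.permCongr p.1, p.2 ∘ e.symm) := by
  obtain ⟨h1, h2⟩ := h
  constructor
  · ext x
    have : ∀ y : β, ((e.permCongr p.1)^3) y = e ((p.1^3) (e.symm y)) := by
      intro y; simp [pow_three_apply, Equiv.permCongr_apply]
    simp [this, h1]
  · intro i
    have := h2 (e.symm i)
    simpa [Equiv.permCongr_apply, pow_three_apply] using this

lemma BB_congr {α β : Type} [DecidableEq α] [Fintype α] [DecidableEq β] [Fintype β]
    (e : α ≃ β) : BB α = BB β := by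
  unfold BB
  apply Finset.card_nbij' (i := fun p => (e.permCongr p.1, p.2 ∘ e.symm))
    (j := fun q => (e.symm.permCongr q.1, q.2 ∘ e.symm.symm))
  · intro p hp
    simp only [Finset.mem_coe, mem_filter, mem_univ, true_and] at *
    exact okC_map e p hp
  · intro q hq
    simp only [Finset.mem_coe, mem_filter, mem_univ, true_and] at *
    exact okC_map e.symm q hq
  · intro p _
    refine Prod.ext ?_ ?_
    · ext x; simp [Equiv.permCongr_apply]
    · ext x; simp
  · intro q _
    refine Prod.ext ?_ ?_
    · ext x; simp [Equiv.permCongr_apply]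
    · ext x; simp


lemma cyc_a {α : Type} [DecidableEq α] {a j l : α} (hja : j ≠ a) (hla : l ≠ a) :
    (Equiv.swap a j * Equiv.swap j l) a = j := by
  rw [Equiv.Perm.mul_apply, Equiv.swap_apply_of_ne_of_ne (Ne.symm hja) (Ne.symm hla),
    Equiv.swap_apply_left]

lemma cyc_j {α : Type} [DecidableEq α] {a j l : α} (hla : l ≠ a) (hlj : l ≠ j) :
    (Equiv.swap a j * Equiv.swap j l) j = l := by
  rw [Equiv.Perm.mul_apply, Equiv.swap_apply_left,
    Equiv.swap_apply_of_ne_of_ne hla hlj]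

lemma cyc_l {α : Type} [DecidableEq α] {a j l : α} :
    (Equiv.swap a j * Equiv.swap j l) l = a := by
  rw [Equiv.Perm.mul_apply, Equiv.swap_apply_right, Equiv.swap_apply_right]

lemma cyc_other {α : Type} [DecidableEq α] {a j l x : α}
    (h1 : x ≠ a) (h2 : x ≠ j) (h3 : x ≠ l) :
    (Equiv.swap a j * Equiv.swap j l) x = x := by
  rw [Equiv.Perm.mul_apply, Equiv.swap_apply_of_ne_of_ne h2 h3,
    Equiv.swap_apply_of_ne_of_ne h1 h2]

lemma cyc_part {α : Type} [DecidableEq α] [Fintype α] (a j l : α)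
    (hja : j ≠ a) (hla : l ≠ a) (hlj : l ≠ j) :
    ((Finset.univ.filter (okC (α := α))).filter (fun p => p.1 a = j ∧ p.1 j = l)).card
      = 4 * BB {x : α // x ≠ a ∧ x ≠ j ∧ x ≠ l} := by
  classical
  have npxa : ¬ (a ≠ a ∧ a ≠ j ∧ a ≠ l) := by simp
  have npxj : ¬ (j ≠ a ∧ j ≠ j ∧ j ≠ l) := by simp
  have npxl : ¬ (l ≠ a ∧ l ≠ j ∧ l ≠ l) := by simp
  -- key preservation fact
  have pres : ∀ (σ : Equiv.Perm α), σ^3 = 1 → σ a = j → σ j = l →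
      ∀ x : α, (x ≠ a ∧ x ≠ j ∧ x ≠ l) ↔ (σ x ≠ a ∧ σ x ≠ j ∧ σ x ≠ l) := by
    intro σ h3 haj hjl x
    have hσl : σ l = a := by
      have := (pow_three_eq_one_iff σ).1 h3 a
      rw [haj, hjl] at this; exact this
    constructor
    · rintro ⟨h1, h2, h4⟩
      exact ⟨fun h => h4 (σ.injective (h.trans hσl.symm)),
        fun h => h1 (σ.injective (h.trans haj.symm)),
        fun h => h2 (σ.injective (h.trans hjl.symm))⟩
    · rintro ⟨g1, g2, g3⟩
      refine ⟨fun h => g2 (by rw [h, haj]), fun h => g3 (by rw [h, hjl]),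
        fun h => g1 (by rw [h, hσl])⟩
  have main : ((Finset.univ.filter (okC (α := α))).filter
        (fun p => p.1 a = j ∧ p.1 j = l)).card
      = ((Finset.univ : Finset (Bool × Bool)) ×ˢ
          (Finset.univ.filter (okC (α := {x : α // x ≠ a ∧ x ≠ j ∧ x ≠ l})))).card := by
    refine Finset.card_bij'
      (fun (p : Equiv.Perm α × (α → Bool)) hp =>
        ((p.2 a, p.2 j),
         (p.1.subtypePerm (by
            have hm := Finset.mem_filter.1 hp
            have hm2 := Finset.mem_filter.1 hm.1
            exact fun x => (pres p.1 hm2.2.1 hm.2.1 hm.2.2 x).symm),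
          fun x => p.2 x.1)))
      (fun (q : (Bool × Bool) ×
          (Equiv.Perm {x : α // x ≠ a ∧ x ≠ j ∧ x ≠ l} ×
            ({x : α // x ≠ a ∧ x ≠ j ∧ x ≠ l} → Bool))) _ =>
        (Equiv.Perm.ofSubtype q.2.1 * (Equiv.swap a j * Equiv.swap j l),
         fun x => if h1 : x = a then q.1.1 else if h2 : x = j then q.1.2
           else if h3 : x = l then xor q.1.1 q.1.2 else q.2.2 ⟨x, ⟨h1, h2, h3⟩⟩))
      ?_ ?_ ?_ ?_
    · -- forward membership
      intro p hp
      have hm := (Finset.mem_filter.1 hp)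
      have haj : p.1 a = j := hm.2.1
      have hjl : p.1 j = l := hm.2.2
      obtain ⟨h3, h2⟩ := (Finset.mem_filter.1 hm.1).2
      simp only [Finset.mem_product, Finset.mem_univ, Finset.mem_filter, true_and]
      constructor
      · rw [Equiv.Perm.subtypePerm_pow]
        ext x
        simp [Equiv.Perm.subtypePerm_apply, h3]
      · rintro ⟨x, hx⟩
        simpa [Equiv.Perm.subtypePerm_apply] using h2 x
    · -- backward membership
      rintro ⟨⟨u, v⟩, σ', ε'⟩ hq
      obtain ⟨h3, h2⟩ := (Finset.mem_filter.1 ((Finset.mem_product.1 hq).2)).2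
      simp only at h3 h2
      have hdisj : (Equiv.Perm.ofSubtype σ').Disjoint (Equiv.swap a j * Equiv.swap j l) := by
        intro x
        by_cases hx : (x ≠ a ∧ x ≠ j ∧ x ≠ l)
        · right; exact cyc_other hx.1 hx.2.1 hx.2.2
        · left; exact Equiv.Perm.ofSubtype_apply_of_not_mem σ' hx
      have hσa : (Equiv.Perm.ofSubtype σ' * (Equiv.swap a j * Equiv.swap j l)) a = j := by
        rw [Equiv.Perm.mul_apply, cyc_a hja hla,
          Equiv.Perm.ofSubtype_apply_of_not_mem σ' npxj]
      have hσj : (Equiv.Perm.ofSubtype σ' * (Equiv.swap a j * Equiv.swap j l)) j = l := by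
        rw [Equiv.Perm.mul_apply, cyc_j hla hlj,
          Equiv.Perm.ofSubtype_apply_of_not_mem σ' npxl]
      have hσl : (Equiv.Perm.ofSubtype σ' * (Equiv.swap a j * Equiv.swap j l)) l = a := by
        rw [Equiv.Perm.mul_apply, cyc_l,
          Equiv.Perm.ofSubtype_apply_of_not_mem σ' npxa]
      have hσx : ∀ (x : α) (hx : x ≠ a ∧ x ≠ j ∧ x ≠ l),
          (Equiv.Perm.ofSubtype σ' * (Equiv.swap a j * Equiv.swap j l)) x
            = (σ' ⟨x, hx⟩).1 := by
        intro x hx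
        rw [Equiv.Perm.mul_apply, cyc_other hx.1 hx.2.1 hx.2.2,
          Equiv.Perm.ofSubtype_apply_of_mem σ' hx]
      have hcyc3 : (Equiv.swap a j * Equiv.swap j l)^3 = 1 := by
        rw [pow_three_eq_one_iff]
        intro x
        by_cases h1 : x = a
        · subst h1
          rw [cyc_a hja hla, cyc_j hla hlj, cyc_l]
        · by_cases h2' : x = j
          · subst h2'
            rw [cyc_j hla hlj, cyc_l, cyc_a hja hla]
          · by_cases h4 : x = l
            · subst h4
              rw [cyc_l, cyc_a hja hla, cyc_j hla hlj]
            · rw [cyc_other h1 h2' h4, cyc_other h1 h2' h4, cyc_other h1 h2' h4]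
      refine Finset.mem_filter.2 ⟨Finset.mem_filter.2 ⟨Finset.mem_univ _, ?_, ?_⟩, hσa, hσj⟩
      · -- cube
        rw [hdisj.commute.mul_pow, hcyc3, mul_one, ← map_pow, h3, map_one]
      · -- bool condition
        intro x
        simp only
        by_cases h1 : x = a
        · subst h1
          rw [hσa, hσj]
          simp only [dif_pos rfl, dif_neg hja, dif_neg hla, dif_neg hlj]
          cases u <;> cases v <;> rfl
        · by_cases hx2 : x = j
          · subst hx2
            rw [hσj, hσl]
            simp only [dif_pos rfl, dif_neg hja, dif_neg hla, dif_neg hlj]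
            cases u <;> cases v <;> rfl
          · by_cases hx3 : x = l
            · subst hx3
              rw [hσl, hσa]
              simp only [dif_pos rfl, dif_neg hja, dif_neg hla, dif_neg hlj]
              cases u <;> cases v <;> rfl
            · have hx : x ≠ a ∧ x ≠ j ∧ x ≠ l := ⟨h1, hx2, hx3⟩
              rw [hσx x hx]
              have hx' : ((σ' ⟨x, hx⟩).1 ≠ a ∧ (σ' ⟨x, hx⟩).1 ≠ j ∧ (σ' ⟨x, hx⟩).1 ≠ l) :=
                (σ' ⟨x, hx⟩).2
              rw [hσx _ hx']
              have e1 : (⟨(σ' ⟨x, hx⟩).1, hx'⟩ : {x : α // x ≠ a ∧ x ≠ j ∧ x ≠ l})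
                  = σ' ⟨x, hx⟩ := Subtype.ext rfl
              rw [e1]
              have hx'' : ((σ' (σ' ⟨x, hx⟩)).1 ≠ a ∧ (σ' (σ' ⟨x, hx⟩)).1 ≠ j
                  ∧ (σ' (σ' ⟨x, hx⟩)).1 ≠ l) := (σ' (σ' ⟨x, hx⟩)).2
              simp only [dif_neg h1, dif_neg hx2, dif_neg hx3,
                dif_neg hx'.1, dif_neg hx'.2.1, dif_neg hx'.2.2,
                dif_neg hx''.1, dif_neg hx''.2.1, dif_neg hx''.2.2]
              have := h2 ⟨x, hx⟩
              simpa using this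
    · -- j ∘ i = id
      intro p hp
      have hm := (Finset.mem_filter.1 hp)
      have haj : p.1 a = j := hm.2.1
      have hjl : p.1 j = l := hm.2.2
      obtain ⟨h3, h2⟩ := (Finset.mem_filter.1 hm.1).2
      have hσl : p.1 l = a := by
        have := (pow_three_eq_one_iff p.1).1 h3 a
        rw [haj, hjl] at this; exact this
      refine Prod.ext ?_ ?_
      · -- permutation component
        show Equiv.Perm.ofSubtype (p.1.subtypePerm (p := fun y => y ≠ a ∧ y ≠ j ∧ y ≠ l) (fun y => (pres p.1 h3 haj hjl y).symm))
          * (Equiv.swap a j * Equiv.swap j l) = p.1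
        have hofa : Equiv.Perm.ofSubtype (p.1.subtypePerm (p := fun y => y ≠ a ∧ y ≠ j ∧ y ≠ l) (fun y => (pres p.1 h3 haj hjl y).symm)) a = a :=
          Equiv.Perm.ofSubtype_apply_of_not_mem (p := fun y => y ≠ a ∧ y ≠ j ∧ y ≠ l) _ npxa
        have hofj : Equiv.Perm.ofSubtype (p.1.subtypePerm (p := fun y => y ≠ a ∧ y ≠ j ∧ y ≠ l) (fun y => (pres p.1 h3 haj hjl y).symm)) j = j :=
          Equiv.Perm.ofSubtype_apply_of_not_mem (p := fun y => y ≠ a ∧ y ≠ j ∧ y ≠ l) _ npxj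
        have hofl : Equiv.Perm.ofSubtype (p.1.subtypePerm (p := fun y => y ≠ a ∧ y ≠ j ∧ y ≠ l) (fun y => (pres p.1 h3 haj hjl y).symm)) l = l :=
          Equiv.Perm.ofSubtype_apply_of_not_mem (p := fun y => y ≠ a ∧ y ≠ j ∧ y ≠ l) _ npxl
        have hofm : ∀ (x : α) (hx : x ≠ a ∧ x ≠ j ∧ x ≠ l),
            Equiv.Perm.ofSubtype (p.1.subtypePerm (p := fun y => y ≠ a ∧ y ≠ j ∧ y ≠ l) (fun y => (pres p.1 h3 haj hjl y).symm)) x = p.1 x := by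
          intro x hx
          rw [Equiv.Perm.ofSubtype_apply_of_mem
            (p := fun y => y ≠ a ∧ y ≠ j ∧ y ≠ l) _ hx, Equiv.Perm.subtypePerm_apply]
        ext x
        rw [Equiv.Perm.mul_apply]
        by_cases h1 : x = a
        · rw [h1, cyc_a hja hla, hofj, haj]
        · by_cases hx2 : x = j
          · rw [hx2, cyc_j hla hlj, hofl, hjl]
          · by_cases hx3 : x = l
            · rw [hx3, cyc_l, hofa, hσl]
            · rw [cyc_other h1 hx2 hx3, hofm x ⟨h1, hx2, hx3⟩]
      · -- bool component
        funext x
        simp only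
        by_cases h1 : x = a
        · subst h1; simp
        · by_cases hx2 : x = j
          · subst hx2; simp [hja]
          · by_cases hx3 : x = l
            · subst hx3
              have := h2 a
              rw [haj, hjl] at this
              have hxl : p.2 x = xor (p.2 a) (p.2 j) := by
                cases hu : p.2 a <;> cases hv : p.2 j <;> cases hw : p.2 x <;>
                  simp [hu, hv, hw] at this ⊢
              simp [hla, hlj, hxl]
            · simp only [dif_neg h1, dif_neg hx2, dif_neg hx3]
    · -- i ∘ j = id
      rintro ⟨⟨u, v⟩, σ', ε'⟩ hq
      refine Prod.ext ?_ ?_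
      · -- (u,v) component
        refine Prod.ext ?_ ?_
        · simp
        · simp [hja]
      · refine Prod.ext ?_ ?_
        · -- σ' component
          ext x
          have hx : (x.1 ≠ a ∧ x.1 ≠ j ∧ x.1 ≠ l) := x.2
          dsimp only
          rw [Equiv.Perm.subtypePerm_apply]
          dsimp only
          rw [Equiv.Perm.mul_apply, cyc_other hx.1 hx.2.1 hx.2.2,
            Equiv.Perm.ofSubtype_apply_of_mem σ' hx, Subtype.coe_eta]
        · -- ε' component
          funext x
          have hx : (x.1 ≠ a ∧ x.1 ≠ j ∧ x.1 ≠ l) := x.2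
          dsimp only
          simp only [dif_neg hx.1, dif_neg hx.2.1, dif_neg hx.2.2]
  rw [main, Finset.card_product]
  have h4 : (Finset.univ : Finset (Bool × Bool)).card = 4 := by decide
  rw [h4]
  rfl

lemma BB_eq_gg (n : ℕ) : ∀ (α : Type) [DecidableEq α] [Fintype α],
    Fintype.card α = n → BB α = gg n := by
  induction n using Nat.strong_induction_on with
  | _ n IH =>
    intro α _ _ hcard
    by_cases hn3 : n < 3
    · interval_cases n
      · rw [BB_congr (Fintype.equivFinOfCardEq hcard)]; decide
      · rw [BB_congr (Fintype.equivFinOfCardEq hcard)]; decide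
      · rw [BB_congr (Fintype.equivFinOfCardEq hcard)]; decide
    · obtain ⟨m, rfl⟩ : ∃ m, n = m + 3 := ⟨n - 3, by omega⟩
      obtain ⟨a⟩ : Nonempty α := Fintype.card_pos_iff.1 (by omega)
      have hsplit := Finset.card_filter_add_card_filter_not
        (s := Finset.univ.filter (okC (α := α))) (p := fun p => p.1 a = a)
      -- Part 1
      have hpart1 : ((Finset.univ.filter (okC (α := α))).filter
          (fun p => p.1 a = a)).card = gg (m+2) := by
        rw [fix_part a]
        refine IH (m+2) (by omega) _ ?_
        have h1 : Fintype.card {x : α // ¬ x = a} = Fintype.card α - Fintype.card {x : α // x = a} :=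
          Fintype.card_subtype_compl _
        have h2 : Fintype.card {x : α // x = a} = 1 := Fintype.card_subtype_eq a
        have : Fintype.card {x : α // ¬ x = a} = m + 2 := by omega
        convert this using 2
      -- Part 2
      have hpart2 : ((Finset.univ.filter (okC (α := α))).filter
          (fun p => ¬ p.1 a = a)).card = (m+2)*(m+1) * (4 * gg m) := by
        set T : Finset (α × α) := (Finset.univ.erase a).offDiag with hT
        have hmem : ∀ p ∈ (Finset.univ.filter (okC (α := α))).filter
            (fun p => ¬ p.1 a = a), (p.1 a, p.1 (p.1 a)) ∈ T := by
          rintro p hp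
          have hm := Finset.mem_filter.1 hp
          have hna : p.1 a ≠ a := hm.2
          obtain ⟨h3, _⟩ := (Finset.mem_filter.1 hm.1).2
          have hcube := (pow_three_eq_one_iff p.1).1 h3 a
          have h2a : p.1 (p.1 a) ≠ a := by
            intro h
            apply hna
            conv_rhs => rw [← hcube]
            rw [h]
          have h2b : p.1 (p.1 a) ≠ p.1 a := fun h => hna (p.1.injective h)
          rw [hT, Finset.mem_offDiag]
          exact ⟨Finset.mem_erase.2 ⟨hna, Finset.mem_univ _⟩,
            Finset.mem_erase.2 ⟨h2a, Finset.mem_univ _⟩, Ne.symm h2b⟩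
        rw [Finset.card_eq_sum_card_fiberwise hmem]
        have hval : ∀ q ∈ T, (((Finset.univ.filter (okC (α := α))).filter
            (fun p => ¬ p.1 a = a)).filter
              (fun p => (p.1 a, p.1 (p.1 a)) = q)).card = 4 * gg m := by
          intro q hq
          rw [hT, Finset.mem_offDiag] at hq
          obtain ⟨hq1, hq2, hq12⟩ := hq
          have hq1a : q.1 ≠ a := (Finset.mem_erase.1 hq1).1
          have hq2a : q.2 ≠ a := (Finset.mem_erase.1 hq2).1
          have hq21 : q.2 ≠ q.1 := Ne.symm hq12
          have hfiber : (((Finset.univ.filter (okC (α := α))).filter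
              (fun p => ¬ p.1 a = a)).filter (fun p => (p.1 a, p.1 (p.1 a)) = q))
              = (Finset.univ.filter (okC (α := α))).filter
                (fun p => p.1 a = q.1 ∧ p.1 q.1 = q.2) := by
            rw [Finset.filter_filter]
            apply Finset.filter_congr
            intro p _
            constructor
            · rintro ⟨hne, heq⟩
              have h1 : p.1 a = q.1 := congrArg Prod.fst heq
              have h2 : p.1 (p.1 a) = q.2 := congrArg Prod.snd heq
              exact ⟨h1, by rw [← h1]; exact h2⟩
            · rintro ⟨h1, h2⟩
              refine ⟨by rw [h1]; exact hq1a, ?_⟩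
              rw [h1, h2]
          rw [hfiber, cyc_part a q.1 q.2 hq1a hq2a hq21]
          congr 1
          refine IH m (by omega) _ ?_
          rw [Fintype.card_subtype]
          have hset : Finset.univ.filter (fun x : α => x ≠ a ∧ x ≠ q.1 ∧ x ≠ q.2)
              = ((Finset.univ.erase q.2).erase q.1).erase a := by
            ext x
            simp only [Finset.mem_filter, Finset.mem_erase, Finset.mem_univ, and_true]
            tauto
          rw [hset, Finset.card_erase_of_mem, Finset.card_erase_of_mem,
            Finset.card_erase_of_mem (Finset.mem_univ _), Finset.card_univ, hcard]
          · omega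
          · exact Finset.mem_erase.2 ⟨hq12, Finset.mem_univ _⟩
          · exact Finset.mem_erase.2 ⟨Ne.symm hq1a,
              Finset.mem_erase.2 ⟨Ne.symm hq2a, Finset.mem_univ _⟩⟩
        rw [Finset.sum_congr rfl hval, Finset.sum_const, smul_eq_mul]
        have hTcard : T.card = (m+2)*(m+1) := by
          rw [hT, Finset.offDiag_card, Finset.card_erase_of_mem (Finset.mem_univ a),
            Finset.card_univ, hcard]
          have e : (m+3-1)*(m+3-1) = (m+2)*(m+1)+(m+2) := by
            have : m+3-1 = m+2 := rfl
            rw [this]; ring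
          omega
        rw [hTcard]
      have harith : (m+2)*(m+1) * (4 * gg m) = 4*(m+2)*(m+1)*gg m := by ring
      have hrec := gg_rec m
      unfold BB
      omega


lemma pow_three_apply' {α : Type} (σ : Equiv.Perm α) (x : α) : (σ^3) x = σ (σ (σ x)) := by
  simp [pow_succ, Equiv.Perm.mul_apply]

lemma pow_three_eq_one_iff' {α : Type} (σ : Equiv.Perm α) :
    σ^3 = 1 ↔ ∀ x, σ (σ (σ x)) = x := by
  constructor
  · intro h x; rw [← pow_three_apply', h]; rfl
  · intro h; ext x; rw [pow_three_apply']; exact h x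

section Phi
variable {n : ℕ}

def lo (i : Fin (n/2)) : Fin n := ⟨i, lt_of_lt_of_le i.2 (Nat.div_le_self n 2)⟩
def hi (i : Fin (n/2)) : Fin n := (lo i).rev
def sB (b : Bool) (i : Fin (n/2)) : Fin n := if b then hi i else lo i

lemma lo_val (i : Fin (n/2)) : (lo i : ℕ) = i := rfl
lemma hi_val (i : Fin (n/2)) : (hi i : ℕ) = n - (i + 1) := Fin.val_rev _
lemma lo_lt (i : Fin (n/2)) : ((lo i : Fin n) : ℕ) < n/2 := i.2
lemma hi_not_lt (i : Fin (n/2)) : ¬ ((hi i : Fin n) : ℕ) < n/2 := by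
  have h := i.2
  rw [hi_val]
  omega
lemma hi_rev (i : Fin (n/2)) : (hi i).rev = lo i := Fin.rev_rev _
lemma lo_rev (i : Fin (n/2)) : (lo i).rev = hi i := rfl

lemma sB_inj {b b' : Bool} {i i' : Fin (n/2)} (h : sB b i = sB b' i') :
    b = b' ∧ i = i' := by
  have h2 := i.2
  have h2' := i'.2
  cases b <;> cases b' <;>
    [(rw [show sB false i = lo i from rfl, show sB false i' = lo i' from rfl] at h);
     (rw [show sB false i = lo i from rfl, show sB true i' = hi i' from rfl] at h);
     (rw [show sB true i = hi i from rfl, show sB false i' = lo i' from rfl] at h);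
     (rw [show sB true i = hi i from rfl, show sB true i' = hi i' from rfl] at h)] <;>
    have hv := congrArg (fun x : Fin n => (x : ℕ)) h <;>
    simp only [lo_val, hi_val] at hv
  · exact ⟨rfl, Fin.ext hv⟩
  · exact absurd hv (by omega)
  · exact absurd hv (by omega)
  · exact ⟨rfl, Fin.ext (by omega)⟩

lemma sB_rev (b : Bool) (i : Fin (n/2)) : (sB b i).rev = sB (!b) i := by
  cases b <;> simp [sB, hi_rev, lo_rev]

lemma trichotomy (x : Fin n) :
    (∃ i, x = lo i) ∨ (∃ i, x = hi i) ∨ (¬ (x:ℕ) < n/2 ∧ ¬ ((x.rev : Fin n):ℕ) < n/2) := by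
  by_cases h : (x:ℕ) < n/2
  · exact Or.inl ⟨⟨x, h⟩, Fin.ext rfl⟩
  · by_cases h2 : ((x.rev : Fin n):ℕ) < n/2
    · refine Or.inr (Or.inl ⟨⟨x.rev, h2⟩, ?_⟩)
      have : lo (⟨x.rev, h2⟩ : Fin (n/2)) = x.rev := Fin.ext rfl
      rw [hi, this, Fin.rev_rev]
    · exact Or.inr (Or.inr ⟨h, h2⟩)

/-- underlying function of the bijection -/
def FF (σ : Equiv.Perm (Fin (n/2))) (ε : Fin (n/2) → Bool) (x : Fin n) : Fin n :=
  if h : (x:ℕ) < n/2 then sB (ε ⟨x, h⟩) (σ ⟨x, h⟩)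
  else if h2 : ((x.rev : Fin n):ℕ) < n/2 then sB (!(ε ⟨x.rev, h2⟩)) (σ ⟨x.rev, h2⟩)
  else x

lemma FF_lo (σ : Equiv.Perm (Fin (n/2))) (ε : Fin (n/2) → Bool) (i : Fin (n/2)) :
    FF σ ε (lo i) = sB (ε i) (σ i) := by
  have h : ((lo i : Fin n):ℕ) < n/2 := lo_lt i
  have he : (⟨((lo i : Fin n) : ℕ), h⟩ : Fin (n/2)) = i := Fin.ext rfl
  rw [FF, dif_pos h, he]

lemma FF_hi (σ : Equiv.Perm (Fin (n/2))) (ε : Fin (n/2) → Bool) (i : Fin (n/2)) :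
    FF σ ε (hi i) = sB (!(ε i)) (σ i) := by
  have h : ¬ ((hi i : Fin n):ℕ) < n/2 := hi_not_lt i
  have h2 : (((hi i).rev : Fin n):ℕ) < n/2 := by rw [hi_rev]; exact lo_lt i
  rw [FF, dif_neg h, dif_pos h2]
  have he : (⟨((hi i).rev : Fin n), h2⟩ : Fin (n/2)) = i := by
    apply Fin.ext
    show (((hi i).rev : Fin n) : ℕ) = i
    rw [hi_rev]; rfl
  rw [he]

lemma FF_sB (σ : Equiv.Perm (Fin (n/2))) (ε : Fin (n/2) → Bool) (b : Bool) (i : Fin (n/2)) :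
    FF σ ε (sB b i) = sB (xor b (ε i)) (σ i) := by
  cases b
  · rw [show sB false i = lo i from rfl, FF_lo, Bool.false_xor]
  · rw [show sB true i = hi i from rfl, FF_hi, Bool.true_xor]

lemma FF_mid (σ : Equiv.Perm (Fin (n/2))) (ε : Fin (n/2) → Bool) (x : Fin n)
    (h : ¬ (x:ℕ) < n/2) (h2 : ¬ ((x.rev : Fin n):ℕ) < n/2) :
    FF σ ε x = x := by
  rw [FF, dif_neg h, dif_neg h2]

lemma FF_leftinv (σ : Equiv.Perm (Fin (n/2))) (ε : Fin (n/2) → Bool) (x : Fin n) :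
    FF σ⁻¹ (fun k => ε (σ⁻¹ k)) (FF σ ε x) = x := by
  rcases trichotomy x with ⟨i, rfl⟩ | ⟨i, rfl⟩ | ⟨h, h2⟩
  · rw [FF_lo, FF_sB]
    simp only [Equiv.Perm.inv_def, Equiv.symm_apply_apply]
    cases h : ε i <;> rfl
  · rw [FF_hi, show (hi i : Fin n) = sB true i from rfl, FF_sB]
    simp only [Equiv.Perm.inv_def, Equiv.symm_apply_apply]
    cases h : ε i <;> rfl
  · rw [FF_mid _ _ _ h h2, FF_mid _ _ _ h h2]

/-- the bijection as a permutation -/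
def Phi (σ : Equiv.Perm (Fin (n/2))) (ε : Fin (n/2) → Bool) : Equiv.Perm (Fin n) where
  toFun := FF σ ε
  invFun := FF σ⁻¹ (fun k => ε (σ⁻¹ k))
  left_inv := FF_leftinv σ ε
  right_inv := by
    intro x
    have h := FF_leftinv σ⁻¹ (fun k => ε (σ⁻¹ k)) x
    rw [inv_inv] at h
    have he : (fun k => ε (σ⁻¹ (σ k))) = ε := by
      funext y; simp
    rwa [he] at h

lemma Phi_apply (σ : Equiv.Perm (Fin (n/2))) (ε : Fin (n/2) → Bool) (x : Fin n) :
    Phi σ ε x = FF σ ε x := rfl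

end Phi

section Phi2
variable {n : ℕ}

lemma rev_mid {x : Fin n} (h : ¬ (x:ℕ) < n/2) (h2 : ¬ ((x.rev : Fin n):ℕ) < n/2) :
    ¬ ((x.rev : Fin n):ℕ) < n/2 ∧ ¬ ((x.rev.rev : Fin n):ℕ) < n/2 := by
  rw [Fin.rev_rev]; exact ⟨h2, h⟩

lemma Phi_comm (σ : Equiv.Perm (Fin (n/2))) (ε : Fin (n/2) → Bool) :
    Phi σ ε * Fin.revPerm = Fin.revPerm * Phi σ ε := by
  ext x
  rw [Equiv.Perm.mul_apply, Equiv.Perm.mul_apply, Fin.revPerm_apply, Fin.revPerm_apply]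
  rcases trichotomy x with ⟨i, rfl⟩ | ⟨i, rfl⟩ | ⟨h, h2⟩
  · rw [lo_rev, Phi_apply, Phi_apply, FF_hi, FF_lo, sB_rev]
  · rw [hi_rev, Phi_apply, Phi_apply, FF_hi, FF_lo, sB_rev, Bool.not_not]
  · obtain ⟨h3, h4⟩ := rev_mid h h2
    rw [Phi_apply, Phi_apply, FF_mid _ _ _ h h2, FF_mid _ _ _ h3 h4]

lemma Phi_cube (σ : Equiv.Perm (Fin (n/2))) (ε : Fin (n/2) → Bool) (b : Bool) (i : Fin (n/2)) :
    ((Phi σ ε)^3) (sB b i) =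
      sB (xor (xor (xor b (ε i)) (ε (σ i))) (ε (σ (σ i)))) (σ (σ (σ i))) := by
  rw [pow_three_apply', Phi_apply, Phi_apply, Phi_apply, FF_sB, FF_sB, FF_sB]

lemma Phi_cube_iff (σ : Equiv.Perm (Fin (n/2))) (ε : Fin (n/2) → Bool) :
    (Phi σ ε)^3 = 1 ↔
      (σ^3 = 1 ∧ ∀ i, xor (ε i) (xor (ε (σ i)) (ε (σ (σ i)))) = false) := by
  constructor
  · intro h
    have key : ∀ i : Fin (n/2),
        xor (xor (xor false (ε i)) (ε (σ i))) (ε (σ (σ i))) = false ∧ σ (σ (σ i)) = i := by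
      intro i
      have := Phi_cube σ ε false i
      rw [h, Equiv.Perm.one_apply] at this
      have h2 := sB_inj this
      exact ⟨h2.1.symm, h2.2.symm⟩
    constructor
    · rw [pow_three_eq_one_iff']
      intro i
      have h3 := (key i).2
      exact h3
    · intro i
      have h1 := (key i).1
      cases ha : ε i <;> cases hb : ε (σ i) <;> cases hc : ε (σ (σ i)) <;>
        simp only [ha, hb, hc] at h1 <;> first | rfl | exact absurd h1 (by decide)
  · rintro ⟨h1, h2⟩
    ext x
    rw [Equiv.Perm.one_apply]
    rcases trichotomy x with ⟨i, rfl⟩ | ⟨i, rfl⟩ | ⟨h, h4⟩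
    · rw [show (lo i : Fin n) = sB false i from rfl, Phi_cube,
        (pow_three_eq_one_iff' σ).1 h1]
      have := h2 i
      congr 1
      cases ha : ε i <;> cases hb : ε (σ i) <;> cases hc : ε (σ (σ i)) <;>
        simp only [ha, hb, hc] at this <;> first | rfl | exact absurd this (by decide)
    · rw [show (hi i : Fin n) = sB true i from rfl, Phi_cube,
        (pow_three_eq_one_iff' σ).1 h1]
      have := h2 i
      congr 1
      cases ha : ε i <;> cases hb : ε (σ i) <;> cases hc : ε (σ (σ i)) <;>
        simp only [ha, hb, hc] at this <;> first | rfl | exact absurd this (by decide)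
    · obtain ⟨h5, h6⟩ := rev_mid h h4
      rw [pow_three_apply', Phi_apply, Phi_apply, Phi_apply,
        FF_mid _ _ _ h h4, FF_mid _ _ _ h h4, FF_mid _ _ _ h h4]

end Phi2

section Steps
variable {n : ℕ}

lemma w_mul_w : (Fin.revPerm : Equiv.Perm (Fin n)) * Fin.revPerm = 1 := by
  ext x
  simp [Equiv.Perm.mul_apply]

lemma stepB (n : ℕ) :
    (Finset.univ.filter (fun π : Equiv.Perm (Fin n) => π^3 = Fin.revPerm)).card
      = (Finset.univ.filter (fun τ : Equiv.Perm (Fin n) =>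
          τ^3 = 1 ∧ τ * Fin.revPerm = Fin.revPerm * τ)).card := by
  refine Finset.card_nbij' (fun π => Fin.revPerm * π) (fun τ => Fin.revPerm * τ)
    ?_ ?_ ?_ ?_
  · intro π hπ
    simp only [Finset.mem_coe, Finset.mem_filter, Finset.mem_univ, true_and] at *
    have hcomm : (Fin.revPerm : Equiv.Perm (Fin n)) * π = π * Fin.revPerm := by
      calc (Fin.revPerm : Equiv.Perm (Fin n)) * π = π^3 * π := by rw [hπ]
        _ = π^(3+1) := (pow_succ π 3).symm
        _ = π * π^3 := pow_succ' π 3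
        _ = π * Fin.revPerm := by rw [hπ]
    have hcomm' : Commute (Fin.revPerm : Equiv.Perm (Fin n)) π := hcomm
    constructor
    · rw [hcomm'.mul_pow, hπ, pow_succ, sq, w_mul_w, one_mul, w_mul_w]
    · rw [mul_assoc, ← hcomm, ← mul_assoc]
  · intro τ hτ
    simp only [Finset.mem_coe, Finset.mem_filter, Finset.mem_univ, true_and] at *
    obtain ⟨h1, h2⟩ := hτ
    have hcomm' : Commute (Fin.revPerm : Equiv.Perm (Fin n)) τ := h2.symm
    rw [hcomm'.mul_pow, h1, mul_one, pow_succ, sq, w_mul_w, one_mul]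
  · intro π _
    show Fin.revPerm * (Fin.revPerm * π) = π
    rw [← mul_assoc, w_mul_w, one_mul]
  · intro τ _
    show Fin.revPerm * (Fin.revPerm * τ) = τ
    rw [← mul_assoc, w_mul_w, one_mul]

lemma key_lemma (τ : Equiv.Perm (Fin n)) (hc : ∀ x : Fin n, τ x.rev = (τ x).rev)
    (i : Fin (n/2)) :
    ((τ (lo i) : Fin n) : ℕ) < n/2 ∨ (((τ (lo i)).rev : Fin n) : ℕ) < n/2 := by
  by_contra hcon
  push_neg at hcon
  obtain ⟨ha, hb⟩ := hcon
  have hy2 : ((τ (lo i) : Fin n) : ℕ) < n := (τ (lo i)).2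
  have hrev : (((τ (lo i)).rev : Fin n) : ℕ) = n - (((τ (lo i) : Fin n) : ℕ)+1) :=
    Fin.val_rev _
  have hyy : (τ (lo i)).rev = τ (lo i) := Fin.ext (by omega)
  have hτrev : τ ((lo i).rev) = (τ (lo i)).rev := hc _
  have heq : (lo i).rev = lo i := τ.injective (by rw [hτrev, hyy])
  have hv := congrArg (fun x : Fin n => (x : ℕ)) heq
  simp only [Fin.val_rev, lo_val] at hv
  have h2 := i.2
  omega

def pdx (τ : Equiv.Perm (Fin n)) (hc : ∀ x : Fin n, τ x.rev = (τ x).rev)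
    (i : Fin (n/2)) : Fin (n/2) :=
  if h : ((τ (lo i) : Fin n) : ℕ) < n/2 then ⟨(τ (lo i) : Fin n), h⟩
  else ⟨((τ (lo i)).rev : Fin n), (key_lemma τ hc i).resolve_left h⟩

lemma pdx_spec (τ : Equiv.Perm (Fin n)) (hc : ∀ x : Fin n, τ x.rev = (τ x).rev)
    (i : Fin (n/2)) :
    τ (lo i) = sB (if ((τ (lo i) : Fin n) : ℕ) < n/2 then false else true)
      (pdx τ hc i) := by
  by_cases h : ((τ (lo i) : Fin n) : ℕ) < n/2
  · rw [if_pos h, pdx, dif_pos h]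
    exact (Fin.ext rfl).symm
  · rw [if_neg h, pdx, dif_neg h]
    show τ (lo i) = hi _
    have e1 : lo (⟨((τ (lo i)).rev : Fin n),
        (key_lemma τ hc i).resolve_left h⟩ : Fin (n/2)) = (τ (lo i)).rev :=
      Fin.ext rfl
    rw [hi, e1, Fin.rev_rev]

lemma pdx_inv (τ : Equiv.Perm (Fin n)) (hc : ∀ x : Fin n, τ x.rev = (τ x).rev)
    (hc' : ∀ x : Fin n, τ⁻¹ x.rev = (τ⁻¹ x).rev) (i : Fin (n/2)) :
    pdx τ⁻¹ hc' (pdx τ hc i) = i := by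
  by_cases h : ((τ (lo i) : Fin n) : ℕ) < n/2
  · have e1 : lo (pdx τ hc i) = τ (lo i) := by
      rw [pdx, dif_pos h]; exact Fin.ext rfl
    have e2 : τ⁻¹ (lo (pdx τ hc i)) = lo i := by rw [e1]; exact τ.symm_apply_apply _
    rw [pdx, dif_pos (by rw [e2]; exact lo_lt i)]
    apply Fin.ext
    show ((τ⁻¹ (lo (pdx τ hc i)) : Fin n) : ℕ) = (i : ℕ)
    rw [e2, lo_val]
  · have e1 : lo (pdx τ hc i) = (τ (lo i)).rev := by
      rw [pdx, dif_neg h]; exact Fin.ext rfl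
    have e2 : τ⁻¹ (lo (pdx τ hc i)) = hi i := by
      rw [e1, hc', Equiv.Perm.inv_def, Equiv.symm_apply_apply, lo_rev]
    rw [pdx, dif_neg (by rw [e2]; exact hi_not_lt i)]
    apply Fin.ext
    show (((τ⁻¹ (lo (pdx τ hc i))).rev : Fin n) : ℕ) = (i : ℕ)
    rw [e2, hi_rev, lo_val]

end Steps

lemma stepC (n : ℕ) :
    (Finset.univ.filter (fun τ : Equiv.Perm (Fin n) =>
        τ^3 = 1 ∧ τ * Fin.revPerm = Fin.revPerm * τ)).card
      = BB (Fin (n/2)) := by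
  symm
  unfold BB
  refine Finset.card_bij (fun p _ => Phi p.1 p.2) ?_ ?_ ?_
  · -- membership
    intro p hp
    simp only [Finset.mem_filter, Finset.mem_univ, true_and] at hp ⊢
    exact ⟨(Phi_cube_iff p.1 p.2).2 hp, Phi_comm p.1 p.2⟩
  · -- injectivity
    intro p hp p' hp' heq
    have hcomp : ∀ i : Fin (n/2), sB (p.2 i) (p.1 i) = sB (p'.2 i) (p'.1 i) := by
      intro i
      have := congrArg (fun f : Equiv.Perm (Fin n) => f (lo i)) heq
      simpa only [Phi_apply, FF_lo] using this
    have h1 : p.1 = p'.1 := by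
      apply Equiv.ext
      intro i
      exact (sB_inj (hcomp i)).2
    have h2 : p.2 = p'.2 := by
      funext i
      exact (sB_inj (hcomp i)).1
    exact Prod.ext h1 h2
  · -- surjectivity
    intro τ hτ
    simp only [Finset.mem_filter, Finset.mem_univ, true_and] at hτ
    obtain ⟨h1, h2⟩ := hτ
    have hc : ∀ x : Fin n, τ x.rev = (τ x).rev := by
      intro x
      have := Equiv.ext_iff.1 h2 x
      simpa [Equiv.Perm.mul_apply] using this
    have hc' : ∀ x : Fin n, τ⁻¹ x.rev = (τ⁻¹ x).rev := by
      intro x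
      apply τ.injective
      rw [Equiv.Perm.inv_def, Equiv.apply_symm_apply, hc, Equiv.apply_symm_apply]
    have hrinv : ∀ i : Fin (n/2), pdx τ hc (pdx τ⁻¹ hc' i) = i := by
      intro i
      have := pdx_inv τ⁻¹ hc' (by rw [inv_inv]; exact hc) i
      convert this using 3 <;> rw [inv_inv]
    set σf : Equiv.Perm (Fin (n/2)) :=
      ⟨pdx τ hc, pdx τ⁻¹ hc', pdx_inv τ hc hc', hrinv⟩ with hσf
    set εf : Fin (n/2) → Bool :=
      fun i => if ((τ (lo i) : Fin n) : ℕ) < n/2 then false else true with hεf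
    have hmid : ∀ x : Fin n, ¬ (x:ℕ) < n/2 → ¬ ((x.rev : Fin n):ℕ) < n/2 → τ x = x := by
      intro x hx hx2
      have hv : ((x.rev : Fin n) : ℕ) = n - ((x : ℕ)+1) := Fin.val_rev _
      have hb : (x : ℕ) < n := x.2
      have hxx : x.rev = x := Fin.ext (by omega)
      have hτx : (τ x).rev = τ x := by rw [← hc, hxx]
      have hw : ((τ x).rev : ℕ) = n - (((τ x) : ℕ)+1) := Fin.val_rev _
      have hw2 : ((τ x) : ℕ) < n := (τ x).2
      have hvv := congrArg (fun y : Fin n => (y : ℕ)) hτx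
      have hvx := congrArg (fun y : Fin n => (y : ℕ)) hxx
      apply Fin.ext
      omega
    have hPhi : Phi σf εf = τ := by
      apply Equiv.ext
      intro x
      rcases trichotomy x with ⟨i, rfl⟩ | ⟨i, rfl⟩ | ⟨h, h4⟩
      · rw [Phi_apply, FF_lo]
        have := pdx_spec τ hc i
        rw [this]
        rfl
      · rw [Phi_apply, FF_hi]
        have hτhi : τ (hi i) = (τ (lo i)).rev := by rw [hi, hc]
        rw [hτhi, pdx_spec τ hc i, sB_rev]
        rfl
      · rw [Phi_apply, FF_mid _ _ _ h h4]
        exact (hmid x h h4).symm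
    have hcond := (Phi_cube_iff σf εf).1 (by rw [hPhi]; exact h1)
    exact ⟨(σf, εf), Finset.mem_filter.2 ⟨Finset.mem_univ _, hcond⟩, hPhi⟩


/-- The number of cube roots of the decreasing permutation. -/
theorem count_cube_roots_of_decreasing (n : ℕ) :
    (Finset.univ.filter (fun π : Equiv.Perm (Fin n) =>
        ∀ i : Fin n, ((π ^ 3) i : ℕ) = n - 1 - (i : ℕ))).card
      = ∑ i ∈ Finset.range (n / 6 + 1),
          (n / 2).choose (3 * i) * ((3 * i).factorial / (i.factorial * 3 ^ i)) * 4 ^ i := by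
  have hfilter : (Finset.univ.filter (fun π : Equiv.Perm (Fin n) =>
      ∀ i : Fin n, ((π ^ 3) i : ℕ) = n - 1 - (i : ℕ)))
      = (Finset.univ.filter (fun π : Equiv.Perm (Fin n) => π^3 = Fin.revPerm)) := by
    apply Finset.filter_congr
    intro π _
    constructor
    · intro h
      apply Equiv.ext
      intro x
      apply Fin.ext
      rw [Fin.revPerm_apply, Fin.val_rev]
      have := h x
      have hx : (x : ℕ) < n := x.2
      omega
    · intro h i
      rw [h, Fin.revPerm_apply, Fin.val_rev]
      omega
  rw [hfilter, stepB n, stepC n, BB_eq_gg (n/2) (Fin (n/2)) (Fintype.card_fin _)]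
  unfold gg
  symm
  have hdd : n / 2 / 3 = n / 6 := by
    rw [Nat.div_div_eq_div_mul]
  calc ∑ i ∈ Finset.range (n/6+1),
        (n/2).choose (3*i) * ((3*i).factorial / (i.factorial * 3^i)) * 4^i
      = ∑ i ∈ Finset.range (n/6+1), (n/2).choose (3*i) * ccc i * 4^i :=
        Finset.sum_congr rfl (fun i _ => by rw [ccc_div])
    _ = ∑ i ∈ Finset.range (n/2+1), (n/2).choose (3*i) * ccc i * 4^i := by
        apply Finset.sum_subset
        · apply Finset.range_subset_range.2
          omega
        · intro x _ hnx
          have hx : n/6 + 1 ≤ x := by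
            by_contra hcon
            exact hnx (Finset.mem_range.2 (by omega))
          have hlt : n/2 < 3*x := by omega
          rw [Nat.choose_eq_zero_of_lt hlt, zero_mul, zero_mul]
end

section
/- If π ∈ S_n satisfies π³ = w₀, the decreasing permutation, then π⁶ = id, π has no 3-cycles nor 4-cycles in its cycle decomposition, and the element (n+1)/2 (when n is odd) is the only fixed point of π. -/
/-- If `π³` is the decreasing permutation, then `π⁶ = 1`, `π` has no 3-cycles nor
4-cycles, and (for odd `n`) the middle element is the unique fixed point of `π`. -/
theorem cube_root_of_decreasing_structure (n : ℕ) (π : Equiv.Perm (Fin n))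
    (h : ∀ i : Fin n, ((π ^ 3) i : ℕ) = n - 1 - (i : ℕ)) :
    π ^ 6 = 1 ∧
    (∀ x : Fin n, (π.cycleOf x).support.card ≠ 3) ∧
    (∀ x : Fin n, (π.cycleOf x).support.card ≠ 4) ∧
    (Odd n → ∀ x : Fin n, π x = x ↔ (x : ℕ) = (n - 1) / 2) := by
  have h6 : π ^ 6 = 1 := by
    ext i
    have h1 := h i
    have h2 := h ((π ^ 3) i)
    have hi : (i : ℕ) < n := i.isLt
    have he : (π ^ 6) i = (π ^ 3) ((π ^ 3) i) := by
      rw [show (6 : ℕ) = 3 + 3 from rfl, pow_add]; rfl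
    simp only [Equiv.Perm.one_apply]
    rw [he, h2, h1]
    omega
  -- a fixed point of π^3 must be the middle element
  have hfix3 : ∀ x : Fin n, (π ^ 3) x = x → 2 * (x : ℕ) = n - 1 := by
    intro x hx
    have := h x
    rw [hx] at this
    have := x.isLt
    omega
  refine ⟨h6, ?_, ?_, ?_⟩
  · intro x hc
    have hne : π x ≠ x := by
      intro hfx
      rw [(Equiv.Perm.cycleOf_eq_one_iff π).2 hfx] at hc
      simp at hc
    have h3x : (π ^ 3) x = x := by
      have := Equiv.Perm.pow_mod_card_support_cycleOf_self_apply π 3 x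
      rw [hc] at this
      simpa using this.symm
    have h3px : (π ^ 3) (π x) = π x := by
      have : (π ^ 3) (π x) = π ((π ^ 3) x) := by
        rw [← Equiv.Perm.mul_apply, ← Equiv.Perm.mul_apply, ← pow_succ, ← pow_succ']
      rw [this, h3x]
    have e1 := hfix3 x h3x
    have e2 := hfix3 (π x) h3px
    exact hne (Fin.ext (by omega))
  · intro x hc
    have hne : π x ≠ x := by
      intro hfx
      rw [(Equiv.Perm.cycleOf_eq_one_iff π).2 hfx] at hc
      simp at hc
    have hdvd : orderOf (π.cycleOf x) ∣ 6 :=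
      (Equiv.Perm.orderOf_cycleOf_dvd_orderOf π x).trans (orderOf_dvd_of_pow_eq_one h6)
    rw [(Equiv.Perm.isCycle_cycleOf π hne).orderOf, hc] at hdvd
    omega
  · intro hodd x
    constructor
    · intro hx
      have h3x : (π ^ 3) x = x := by
        rw [show (3 : ℕ) = 1 + 1 + 1 from rfl, pow_add, pow_add, pow_one,
          Equiv.Perm.mul_apply, Equiv.Perm.mul_apply, hx, hx, hx]
      have := hfix3 x h3x
      omega
    · intro hx
      -- x is the middle element; π x is also a fixed point of π^3
      obtain ⟨m, hm⟩ := hodd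
      have h3x : (π ^ 3) x = x := by
        apply Fin.ext
        rw [h x, hx]
        omega
      have h3px : (π ^ 3) (π x) = π x := by
        have : (π ^ 3) (π x) = π ((π ^ 3) x) := by
          rw [← Equiv.Perm.mul_apply, ← Equiv.Perm.mul_apply, ← pow_succ, ← pow_succ']
        rw [this, h3x]
      have e2 := hfix3 (π x) h3px
      exact Fin.ext (by omega)
end
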